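/- arXiv:1909.07233 — 8 statements merged into one kernel-verified Lean document; each statement's English description precedes it below -/
import Mathlib

section
/- Under the stated assumptions, for the target cluster i* and intervention period j*, the synthetic control estimator is unbiased for the marginal control-condition mean in that period: E[Z_{i*,j*}] = Y_{·j*}. -/
open MeasureTheory ProbabilityTheory Finset

/-- A countable product of a.e.-measurable coordinate functions is a.e.-measurable. -/
private lemma aemeasurable_pi_lambda' {α : Type*} {ι : Type*} [Countable ι]
    {π : ι → Type*} [∀ i, MeasurableSpace (π i)] [MeasurableSpace α] {μ : Measure α}
    {f : α → ∀ i, π i} (hf : ∀ i, AEMeasurable (fun a => f a i) μ) :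
    AEMeasurable f μ := by
  choose g hgm hg using hf
  refine ⟨fun a i => g i a, measurable_pi_lambda _ hgm, ?_⟩
  filter_upwards [ae_all_iff.2 hg] with a ha
  funext i
  exact ha i

/-- A subfamily of an independent family of (same-codomain) random variables is independent. -/
private lemma iIndepFun_precomp' {Ω ι κ β : Type*} [MeasurableSpace Ω] [mβ : MeasurableSpace β]
    {μ : Measure Ω} {f : ι → Ω → β}
    (h : iIndepFun f μ) {c : κ → ι} (hc : Function.Injective c) :
    iIndepFun (fun k => f (c k)) μ := by
  classical
  rw [iIndepFun_iff_measure_inter_preimage_eq_mul] at h ⊢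
  intro S sets hsets
  set sets' : ι → Set β :=
    fun i => if h : ∃ k ∈ S, c k = i then sets h.choose else Set.univ with hsets'
  have hkey : ∀ k ∈ S, sets' (c k) = sets k := by
    intro k hk
    have hex : ∃ k' ∈ S, c k' = c k := ⟨k, hk, rfl⟩
    have h2 : hex.choose = k := hc hex.choose_spec.2
    simp only [hsets', dif_pos hex, h2]
  have h1 : (⋂ i ∈ S.image c, f i ⁻¹' sets' i) = ⋂ k ∈ S, f (c k) ⁻¹' sets k := by
    rw [Finset.set_biInter_finset_image]
    exact Set.iInter₂_congr fun k hk => by rw [hkey k hk]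
  have h2 := h (S.image c) (sets := sets') ?_
  · rw [h1] at h2
    rw [h2, Finset.prod_image (fun a _ b _ hab => hc hab)]
    exact Finset.prod_congr rfl fun k hk => by rw [hkey k hk]
  · intro i hi
    rw [Finset.mem_image] at hi
    obtain ⟨k, hk, rfl⟩ := hi
    rw [hkey k hk]
    exact hsets k hk

/-- extension of a finite vector by zero -/
private def ext0 (m : ℕ) (w : Fin m → ℝ) : ℕ → ℝ := fun j => if h : j < m then w ⟨j, h⟩ else 0

private lemma ext0_meas (m : ℕ) : Measurable (ext0 m) := by
  apply measurable_pi_lambda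
  intro j
  by_cases h : j < m
  · simpa only [ext0, dif_pos h] using measurable_pi_apply _
  · simpa only [ext0, dif_neg h] using measurable_const

private lemma ext0_neg (m : ℕ) (w : Fin m → ℝ) : ext0 m (-w) = -(ext0 m w) := by
  funext j
  by_cases h : j < m <;> simp [ext0, h]

/-- centered control-period vector of cluster `i` -/
private def ctr {Ω ι : Type*} (jlast : ι → ℕ) (Y : ι → ℕ → Ω → ℝ) (Ybar : ℕ → ℝ) (i : ι)
    (ω : Ω) : Fin (jlast i) → ℝ := fun r => Y i (r + 1) ω - Ybar (r + 1)

/-- centered control-period vector, extended by zero to an `ℕ`-indexed sequence -/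
private def Fc {Ω ι : Type*} (jlast : ι → ℕ) (Y : ι → ℕ → Ω → ℝ) (Ybar : ℕ → ℝ) (i : ι)
    (ω : Ω) : ℕ → ℝ := ext0 (jlast i) (ctr jlast Y Ybar i ω)

private lemma Fc_val {Ω ι : Type*} (jlast : ι → ℕ) (Y : ι → ℕ → Ω → ℝ) (Ybar : ℕ → ℝ) (i : ι)
    (ω : Ω) (j : ℕ) (h : j < jlast i) :
    Fc jlast Y Ybar i ω j = Y i (j + 1) ω - Ybar (j + 1) := by
  simp [Fc, ext0, ctr, dif_pos h]

/-- the odd functional whose expectation under the joint law is the centered estimator -/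
private noncomputable def gfun (n jI jstar : ℕ) (v : (Fin jI → Fin n → ℝ) → Fin n → ℝ)
    (w : Option (Fin n) → ℕ → ℝ) : ℝ :=
  ∑ k : Fin n, v (fun r k' => w none r - w (some k') r) k * w (some k) (jstar - 1)

private lemma gfun_meas (n jI jstar : ℕ) (v : (Fin jI → Fin n → ℝ) → Fin n → ℝ)
    (hv : Measurable v) : Measurable (gfun n jI jstar v) := by
  apply Finset.measurable_sum
  intro k _
  have hmat : Measurable (fun w : Option (Fin n) → ℕ → ℝ =>
      (fun r : Fin jI => fun k' : Fin n => w none r - w (some k') r)) := by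
    apply measurable_pi_lambda
    intro r
    apply measurable_pi_lambda
    intro k'
    exact ((measurable_pi_apply (r : ℕ)).comp (measurable_pi_apply none)).sub
      ((measurable_pi_apply (r : ℕ)).comp
        (measurable_pi_apply (some k') : Measurable fun w : Option (Fin n) → ℕ → ℝ => w (some k')))
  exact ((measurable_pi_apply k).comp (hv.comp hmat)).mul
    ((measurable_pi_apply (jstar - 1)).comp (measurable_pi_apply (some k)))

private lemma gfun_neg (n jI jstar : ℕ) (v : (Fin jI → Fin n → ℝ) → Fin n → ℝ)
    (hveven : ∀ A, v (-A) = v A) (w : Option (Fin n) → ℕ → ℝ) :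
    gfun n jI jstar v (-w) = -gfun n jI jstar v w := by
  unfold gfun
  have h1 : (fun r : Fin jI => fun k' : Fin n => (-w) none r - (-w) (some k') r)
      = -(fun r : Fin jI => fun k' : Fin n => w none r - w (some k') r) := by
    funext r k'
    simp only [Pi.neg_apply]
    ring
  rw [h1, hveven, ← Finset.sum_neg_distrib]
  exact Finset.sum_congr rfl fun k _ => by simp only [Pi.neg_apply]; ring

/-- **Unbiasedness of the synthetic control estimator (Theorem 1).**
In a stepped wedge trial, clusters `i` are on control in periods `1, …, jlast i` and on
intervention afterwards.  Fix a target cluster `istar` and a period `jstar` in which it is on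
intervention, let `j₀ = jlast istar ≥ 1` be its last control period, and let `mcl 0, …, mcl (n-1)`
be (distinct) clusters on control in period `jstar`.  Assume the control-period outcome vectors of
distinct clusters are mutually independent and integrable, each with mean
`(Ybar 1, …, Ybar (jlast i))` and law symmetric about this mean.  The synthetic-control weights
are given by a measurable map `v` into the standard probability simplex, depending only on the
matrix of differences between the pre-intervention outcomes of the target and donor clusters, and
satisfying `v (-A) = v A`.  Then the synthetic control estimator
`Z = ∑ k, v (Ydiff) k * Y (mcl k) jstar` satisfies `E[Z] = Ybar jstar`. -/
theorem stmt_0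
    {Ω : Type*} [MeasureSpace Ω] [IsProbabilityMeasure (ℙ : Measure Ω)]
    {ι : Type*} (jlast : ι → ℕ) (Y : ι → ℕ → Ω → ℝ) (Ybar : ℕ → ℝ)
    -- integrability of the control-period outcomes
    (hintY : ∀ i : ι, ∀ j ∈ Icc 1 (jlast i), Integrable (Y i j) ℙ)
    -- the control-period outcome vectors of distinct clusters are mutually independent
    (hindep : iIndepFun
      (fun (i : ι) (ω : Ω) => fun r : Fin (jlast i) => Y i (r + 1) ω) ℙ)
    -- each control-period outcome vector has mean `(Ybar 1, …, Ybar (jlast i))` …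
    (hmean : ∀ i : ι, ∀ j ∈ Icc 1 (jlast i), ∫ ω, Y i j ω ∂ℙ = Ybar j)
    -- … and its law is symmetric about this mean
    (hsym : ∀ i : ι,
      Measure.map (fun ω => fun r : Fin (jlast i) => Y i (r + 1) ω - Ybar (r + 1)) ℙ
        = Measure.map (fun ω => fun r : Fin (jlast i) => -(Y i (r + 1) ω - Ybar (r + 1))) ℙ)
    -- the target cluster and target period: `X istar jstar = 1`
    (istar : ι) (jstar : ℕ) (hj0 : 1 ≤ jlast istar) (hjstar : jlast istar < jstar)
    -- the donor clusters: distinct clusters, different from the target, on control at `jstar`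
    (n : ℕ) (mcl : Fin n → ι) (hmcl_inj : Function.Injective mcl)
    (hmcl_ne : ∀ k, mcl k ≠ istar) (hmcl_ctrl : ∀ k, jstar ≤ jlast (mcl k))
    -- the synthetic-control weight map: measurable, into the simplex, and even
    (v : (Fin (jlast istar) → Fin n → ℝ) → Fin n → ℝ)
    (hvmeas : Measurable v)
    (hvsimplex : ∀ A, (∀ k, 0 ≤ v A k) ∧ ∑ k, v A k = 1)
    (hveven : ∀ A, v (-A) = v A)
    -- the matrix of pre-intervention differences and the synthetic control estimator
    (Ydiff : Ω → Fin (jlast istar) → Fin n → ℝ)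
    (hYdiff : ∀ ω r k, Ydiff ω r k = Y istar (r + 1) ω - Y (mcl k) (r + 1) ω)
    (Z : Ω → ℝ)
    (hZ : ∀ ω, Z ω = ∑ k, v (Ydiff ω) k * Y (mcl k) jstar ω) :
    ∫ ω, Z ω ∂ℙ = Ybar jstar := by
  classical
  have hjstar1 : 1 ≤ jstar := hj0.trans hjstar.le
  -- the finite family of relevant clusters
  have hcinj : Function.Injective (fun o : Option (Fin n) => o.elim istar mcl) := by
    rintro (_ | a) (_ | b) hab <;> simp only [Option.elim] at hab
    · rfl
    · exact absurd hab.symm (hmcl_ne b)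
    · exact absurd hab (hmcl_ne a)
    · exact congrArg some (hmcl_inj hab)
  -- independence of the centered, zero-extended control vectors
  have hFindep : iIndepFun
      (Fc jlast Y Ybar) ℙ := by
    have h := hindep.comp
      (fun i (w : Fin (jlast i) → ℝ) => ext0 (jlast i) (fun r => w r - Ybar (r + 1)))
      (fun i => (ext0_meas _).comp (measurable_pi_lambda _ fun r =>
        (measurable_pi_apply r).sub measurable_const))
    exact h
  -- a.e.-measurability
  have hctr_ae : ∀ i, AEMeasurable (ctr jlast Y Ybar i) ℙ := by
    intro i
    apply aemeasurable_pi_lambda'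
    intro r
    have hr := r.isLt
    exact ((hintY i (r + 1) (by simp only [Finset.mem_Icc]; omega)).aemeasurable).sub
      aemeasurable_const
  have hFae : ∀ i, AEMeasurable (Fc jlast Y Ybar i) ℙ :=
    fun i => (ext0_meas (jlast i)).comp_aemeasurable (hctr_ae i)
  -- symmetry of the marginal laws
  have hsymF : ∀ i, Measure.map (Fc jlast Y Ybar i) ℙ
      = Measure.map (fun ω => -(Fc jlast Y Ybar i ω)) ℙ := by
    intro i
    have e1 : Measure.map (Fc jlast Y Ybar i) ℙ
        = (Measure.map (ctr jlast Y Ybar i) ℙ).map (ext0 (jlast i)) :=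
      (AEMeasurable.map_map_of_aemeasurable ((ext0_meas _).aemeasurable) (hctr_ae i)).symm
    have e2 : Measure.map (fun ω => -(Fc jlast Y Ybar i ω)) ℙ
        = (Measure.map (fun ω => -(ctr jlast Y Ybar i ω)) ℙ).map (ext0 (jlast i)) := by
      have hcomp : (fun ω => -(Fc jlast Y Ybar i ω))
          = ext0 (jlast i) ∘ (fun ω => -(ctr jlast Y Ybar i ω)) := by
        funext ω
        exact (ext0_neg _ _).symm
      rw [hcomp]
      exact (AEMeasurable.map_map_of_aemeasurable ((ext0_meas _).aemeasurable)
        ((hctr_ae i).neg)).symm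
    rw [e1, e2]
    congr 1
    exact hsym i
  -- independence of the selected subfamily, and of its negation
  have hUindep : iIndepFun
      (fun k : Option (Fin n) => Fc jlast Y Ybar (k.elim istar mcl)) ℙ := iIndepFun_precomp' hFindep hcinj
  have hU'indep : iIndepFun
      (fun k : Option (Fin n) => (fun x : ℕ → ℝ => -x) ∘ (fun ω => Fc jlast Y Ybar (k.elim istar mcl) ω)) ℙ :=
    hUindep.comp (fun _ => fun x => -x) (fun _ => measurable_neg)
  -- the joint maps
  have hWae : AEMeasurable (fun ω (k : Option (Fin n)) => Fc jlast Y Ybar (k.elim istar mcl) ω) ℙ :=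
    aemeasurable_pi_lambda' fun k => hFae (k.elim istar mcl)
  have hW'ae : AEMeasurable
      (fun ω (k : Option (Fin n)) => -(Fc jlast Y Ybar (k.elim istar mcl) ω)) ℙ :=
    aemeasurable_pi_lambda' fun k => (hFae (k.elim istar mcl)).neg
  -- equality of the two joint laws
  have hmapeq :
      Measure.map (fun ω (k : Option (Fin n)) => Fc jlast Y Ybar (k.elim istar mcl) ω) ℙ
      = Measure.map (fun ω (k : Option (Fin n)) => -(Fc jlast Y Ybar (k.elim istar mcl) ω)) ℙ := by
    haveI : IsProbabilityMeasure
        (Measure.map (fun ω (k : Option (Fin n)) => Fc jlast Y Ybar (k.elim istar mcl) ω) ℙ) :=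
      Measure.isProbabilityMeasure_map hWae
    refine ext_of_generate_finite _ generateFrom_pi.symm isPiSystem_pi ?_ ?_
    · rintro s ⟨A, hA, rfl⟩
      have hAm : ∀ k, MeasurableSet (A k) := fun k => hA k (Set.mem_univ k)
      rw [Measure.map_apply_of_aemeasurable hWae (MeasurableSet.univ_pi hAm),
          Measure.map_apply_of_aemeasurable hW'ae (MeasurableSet.univ_pi hAm)]
      have e1 : (fun ω (k : Option (Fin n)) => Fc jlast Y Ybar (k.elim istar mcl) ω)
            ⁻¹' Set.pi Set.univ A
          = ⋂ k ∈ (Finset.univ : Finset (Option (Fin n))),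
              (fun ω => Fc jlast Y Ybar (k.elim istar mcl) ω) ⁻¹' A k := by
        ext ω
        simp [Set.mem_pi]
      have e2 : (fun ω (k : Option (Fin n)) => -(Fc jlast Y Ybar (k.elim istar mcl) ω))
            ⁻¹' Set.pi Set.univ A
          = ⋂ k ∈ (Finset.univ : Finset (Option (Fin n))),
              (fun ω => -(Fc jlast Y Ybar (k.elim istar mcl) ω)) ⁻¹' A k := by
        ext ω
        simp [Set.mem_pi]
      rw [e1, e2]
      have p1 : (ℙ : Measure Ω) (⋂ k ∈ (Finset.univ : Finset (Option (Fin n))),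
            (fun ω => Fc jlast Y Ybar (k.elim istar mcl) ω) ⁻¹' A k)
          = ∏ k : Option (Fin n),
              (ℙ : Measure Ω) ((fun ω => Fc jlast Y Ybar (k.elim istar mcl) ω) ⁻¹' A k) :=
        hUindep.measure_inter_preimage_eq_mul Finset.univ (fun k _ => hAm k)
      have p2 : (ℙ : Measure Ω) (⋂ k ∈ (Finset.univ : Finset (Option (Fin n))),
            (fun ω => -(Fc jlast Y Ybar (k.elim istar mcl) ω)) ⁻¹' A k)
          = ∏ k : Option (Fin n),
              (ℙ : Measure Ω) ((fun ω => -(Fc jlast Y Ybar (k.elim istar mcl) ω)) ⁻¹' A k) :=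
        hU'indep.measure_inter_preimage_eq_mul Finset.univ (fun k _ => hAm k)
      rw [p1, p2]
      refine Finset.prod_congr rfl fun k _ => ?_
      calc (ℙ : Measure Ω) ((fun ω => Fc jlast Y Ybar (k.elim istar mcl) ω) ⁻¹' A k)
          = Measure.map (Fc jlast Y Ybar (k.elim istar mcl)) ℙ (A k) :=
            (Measure.map_apply_of_aemeasurable (hFae _) (hAm k)).symm
        _ = Measure.map (fun ω => -(Fc jlast Y Ybar (k.elim istar mcl) ω)) ℙ (A k) := by
            rw [hsymF (k.elim istar mcl)]
        _ = (ℙ : Measure Ω) ((fun ω => -(Fc jlast Y Ybar (k.elim istar mcl) ω)) ⁻¹' A k) :=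
            Measure.map_apply_of_aemeasurable ((hFae _).neg) (hAm k)
    · rw [Measure.map_apply_of_aemeasurable hWae MeasurableSet.univ,
          Measure.map_apply_of_aemeasurable hW'ae MeasurableSet.univ]
      simp
  -- evaluating the functional along the joint map
  have hgW : ∀ ω, gfun n (jlast istar) jstar v
        (fun k => Fc jlast Y Ybar (k.elim istar mcl) ω)
      = ∑ k : Fin n, v (Ydiff ω) k * (Y (mcl k) jstar ω - Ybar jstar) := by
    intro ω
    unfold gfun
    have hmat : (fun (r : Fin (jlast istar)) (k' : Fin n) =>
          (fun k : Option (Fin n) => Fc jlast Y Ybar (k.elim istar mcl) ω) none r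
            - (fun k : Option (Fin n) => Fc jlast Y Ybar (k.elim istar mcl) ω) (some k') r)
        = Ydiff ω := by
      funext r k'
      have h1 : (r : ℕ) < jlast istar := r.isLt
      have h2 : (r : ℕ) < jlast (mcl k') := lt_of_lt_of_le (h1.trans hjstar) (hmcl_ctrl k')
      simp only [Option.elim]
      rw [Fc_val _ _ _ _ _ _ h1, Fc_val _ _ _ _ _ _ h2, hYdiff ω r k']
      ring
    rw [hmat]
    refine Finset.sum_congr rfl fun k _ => ?_
    have h3 : jstar - 1 < jlast (mcl k) := by
      have := hmcl_ctrl k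
      omega
    have h4 : jstar - 1 + 1 = jstar := by omega
    simp only [Option.elim]
    rw [Fc_val _ _ _ _ _ _ h3, h4]
  -- the pointwise decomposition of the estimator
  have hZg : ∀ ω, Z ω = Ybar jstar + gfun n (jlast istar) jstar v
      (fun k => Fc jlast Y Ybar (k.elim istar mcl) ω) := by
    intro ω
    rw [hZ ω, hgW ω]
    have hs := (hvsimplex (Ydiff ω)).2
    simp_rw [mul_sub]
    rw [Finset.sum_sub_distrib, ← Finset.sum_mul, hs, one_mul]
    ring
  -- integrability of the centered part
  have hgm : Measurable (gfun n (jlast istar) jstar v) := gfun_meas _ _ _ _ hvmeas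
  have hints : Integrable (fun ω => gfun n (jlast istar) jstar v
      (fun k => Fc jlast Y Ybar (k.elim istar mcl) ω)) ℙ := by
    have hB : Integrable (fun ω => ∑ k : Fin n, |Y (mcl k) jstar ω - Ybar jstar|) ℙ := by
      apply integrable_finset_sum
      intro k _
      exact ((hintY (mcl k) jstar
        (by simp only [Finset.mem_Icc]; exact ⟨hjstar1, hmcl_ctrl k⟩)).sub
        (integrable_const _)).abs
    apply Integrable.mono' hB (hgm.comp_aemeasurable hWae).aestronglyMeasurable
    refine Filter.Eventually.of_forall fun ω => ?_
    show ‖gfun n (jlast istar) jstar v (fun k => Fc jlast Y Ybar (k.elim istar mcl) ω)‖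
      ≤ ∑ k : Fin n, |Y (mcl k) jstar ω - Ybar jstar|
    rw [Real.norm_eq_abs, hgW ω]
    calc |∑ k : Fin n, v (Ydiff ω) k * (Y (mcl k) jstar ω - Ybar jstar)|
        ≤ ∑ k : Fin n, |v (Ydiff ω) k * (Y (mcl k) jstar ω - Ybar jstar)| :=
          Finset.abs_sum_le_sum_abs _ _
      _ ≤ ∑ k : Fin n, |Y (mcl k) jstar ω - Ybar jstar| := by
          apply Finset.sum_le_sum
          intro k _
          rw [abs_mul]
          have h0 : 0 ≤ v (Ydiff ω) k := (hvsimplex (Ydiff ω)).1 k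
          have h1 : v (Ydiff ω) k ≤ 1 := by
            calc v (Ydiff ω) k ≤ ∑ k', v (Ydiff ω) k' :=
                  Finset.single_le_sum (fun k' _ => (hvsimplex (Ydiff ω)).1 k')
                    (Finset.mem_univ k)
              _ = 1 := (hvsimplex (Ydiff ω)).2
          rw [abs_of_nonneg h0]
          exact mul_le_of_le_one_left (abs_nonneg _) h1
  -- the centered part has zero expectation, by symmetry
  have hzero : ∫ ω, gfun n (jlast istar) jstar v
      (fun k => Fc jlast Y Ybar (k.elim istar mcl) ω) ∂ℙ = 0 := by
    have i1 : ∫ ω, gfun n (jlast istar) jstar v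
          (fun k => Fc jlast Y Ybar (k.elim istar mcl) ω) ∂ℙ
        = ∫ x, gfun n (jlast istar) jstar v x
            ∂(Measure.map (fun ω (k : Option (Fin n)) => Fc jlast Y Ybar (k.elim istar mcl) ω) ℙ) :=
      (integral_map hWae hgm.aestronglyMeasurable).symm
    have i2 : ∫ x, gfun n (jlast istar) jstar v x
          ∂(Measure.map (fun ω (k : Option (Fin n)) => -(Fc jlast Y Ybar (k.elim istar mcl) ω)) ℙ)
        = ∫ ω, gfun n (jlast istar) jstar v
            (fun k => -(Fc jlast Y Ybar (k.elim istar mcl) ω)) ∂ℙ :=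
      integral_map hW'ae hgm.aestronglyMeasurable
    have i3 : ∀ ω, gfun n (jlast istar) jstar v
          (fun k => -(Fc jlast Y Ybar (k.elim istar mcl) ω))
        = -gfun n (jlast istar) jstar v (fun k => Fc jlast Y Ybar (k.elim istar mcl) ω) := by
      intro ω
      have : (fun k : Option (Fin n) => -(Fc jlast Y Ybar (k.elim istar mcl) ω))
          = -(fun k : Option (Fin n) => Fc jlast Y Ybar (k.elim istar mcl) ω) := rfl
      rw [this, gfun_neg _ _ _ _ hveven]
    have key : ∫ ω, gfun n (jlast istar) jstar v
          (fun k => Fc jlast Y Ybar (k.elim istar mcl) ω) ∂ℙ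
        = -∫ ω, gfun n (jlast istar) jstar v
            (fun k => Fc jlast Y Ybar (k.elim istar mcl) ω) ∂ℙ := by
      conv_lhs => rw [i1, hmapeq, i2]
      simp_rw [i3]
      rw [integral_neg]
    linarith
  -- conclusion
  have hfin : (fun ω => Z ω) = fun ω => Ybar jstar + gfun n (jlast istar) jstar v
      (fun k => Fc jlast Y Ybar (k.elim istar mcl) ω) := funext hZg
  rw [hfin, integral_add (integrable_const _) hints, hzero, integral_const]
  simp
end

section
/- Assume there exist constants Y_{·1},...,Y_{·J} and β such that E[Y_{i,j}] = Y_{·j} + β·X_{i,j} for all clusters i and periods j (a constant additive treatment effect across clusters and periods). Then for any deterministic nonnegative weights w_j with positive sum, both crossover estimators are unbiased: E[β̂] = β and E[β̃] = β. -/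
open MeasureTheory ProbabilityTheory Finset

/-- **Unbiasedness of the crossover estimators (Theorem 3).**
In a stepped wedge trial with clusters `1, …, I` and periods `1, …, J`, intervention indicators
`X i j` nondecreasing in `j`, and integrable outcomes `Y i j` satisfying
`E[Y i j] = Ybar j + β · X i j` (a constant additive treatment effect), both crossover
estimators—the controls-only estimator `β̂` and the alternative estimator `β̃`—are unbiased:
`E[β̂] = β` and `E[β̃] = β`. -/
theorem stmt_5
    {Ω : Type*} [MeasureSpace Ω] [IsProbabilityMeasure (ℙ : Measure Ω)]
    (I J : ℕ) (Y : ℕ → ℕ → Ω → ℝ) (X : ℕ → ℕ → Bool) (Ybar : ℕ → ℝ) (β : ℝ)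
    -- intervention indicators are nondecreasing in `j`
    (hXmono : ∀ i, ∀ j j', j ≤ j' → X i j = true → X i j' = true)
    -- outcomes are integrable
    (hint : ∀ i ∈ Icc 1 I, ∀ j ∈ Icc 1 J, Integrable (Y i j) ℙ)
    -- constant additive treatment effect across clusters and periods
    (hmean : ∀ i ∈ Icc 1 I, ∀ j ∈ Icc 1 J,
      ∫ ω, Y i j ω ∂ℙ = Ybar j + (if X i j then β else 0))
    -- the sets `I_{0,j}`, `I_{1,j}`, `I_{2,j}` and their sizes
    (I0 I1 I2 : ℕ → Finset ℕ) (n0 n1 n2 : ℕ → ℕ)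
    (hI0 : ∀ j, I0 j = (Icc 1 I).filter fun i => X i j = false ∧ X i (j - 1) = false)
    (hI1 : ∀ j, I1 j = (Icc 1 I).filter fun i => X i j = true ∧ X i (j - 1) = false)
    (hI2 : ∀ j, I2 j = (Icc 1 I).filter fun i => X i j = true ∧ X i (j - 1) = true)
    (hn0 : ∀ j, n0 j = (I0 j).card) (hn1 : ∀ j, n1 j = (I1 j).card)
    (hn2 : ∀ j, n2 j = (I2 j).card)
    -- consecutive-period contrasts
    (D : ℕ → ℕ → Ω → ℝ) (hD : ∀ i j ω, D i j ω = Y i j ω - Y i (j - 1) ω)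
    -- period-specific crossover estimators
    (βhat βtilde : ℕ → Ω → ℝ)
    (hβhat : ∀ j ω, βhat j ω =
      (n1 j : ℝ)⁻¹ * ∑ i ∈ I1 j, D i j ω - (n0 j : ℝ)⁻¹ * ∑ i ∈ I0 j, D i j ω)
    (hβtilde : ∀ j ω, βtilde j ω =
      (n1 j : ℝ)⁻¹ * ∑ i ∈ I1 j, D i j ω
        - ((n0 j : ℝ) + (n2 j : ℝ))⁻¹ * ∑ i ∈ I0 j ∪ I2 j, D i j ω)
    -- the applicable periods for each estimator
    (S S' : Finset ℕ)
    (hS : S = (Icc 2 J).filter fun j => 1 ≤ n0 j ∧ 1 ≤ n1 j)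
    (hS' : S' = (Icc 2 J).filter fun j => 1 ≤ n1 j ∧ 1 ≤ n0 j + n2 j)
    -- deterministic nonnegative weights with positive sums
    (w w' : ℕ → ℝ)
    (hw : ∀ j ∈ S, 0 ≤ w j) (hw' : ∀ j ∈ S', 0 ≤ w' j)
    (hwpos : 0 < ∑ j ∈ S, w j) (hw'pos : 0 < ∑ j ∈ S', w' j) :
    (∫ ω, ∑ j ∈ S, (w j / ∑ j' ∈ S, w j') * βhat j ω ∂ℙ = β)
      ∧ (∫ ω, ∑ j ∈ S', (w' j / ∑ j' ∈ S', w' j') * βtilde j ω ∂ℙ = β) := by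
  -- basic membership facts
  have hj1 : ∀ j ∈ Icc 2 J, j ∈ Icc 1 J := by
    intro j hj; simp only [mem_Icc] at *; omega
  have hj2 : ∀ j ∈ Icc 2 J, j - 1 ∈ Icc 1 J := by
    intro j hj; simp only [mem_Icc] at *; omega
  have hDint : ∀ j ∈ Icc 2 J, ∀ i ∈ Icc 1 I, Integrable (D i j) ℙ := by
    intro j hj i hi
    have h : D i j = fun ω => Y i j ω - Y i (j-1) ω := funext fun ω => hD i j ω
    rw [h]
    exact (hint i hi j (hj1 j hj)).sub (hint i hi (j-1) (hj2 j hj))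
  have hDmean : ∀ j ∈ Icc 2 J, ∀ i ∈ Icc 1 I,
      ∫ ω, D i j ω ∂ℙ = (Ybar j + (if X i j then β else 0))
        - (Ybar (j-1) + (if X i (j-1) then β else 0)) := by
    intro j hj i hi
    have h : D i j = fun ω => Y i j ω - Y i (j-1) ω := funext fun ω => hD i j ω
    rw [h, integral_sub (hint i hi j (hj1 j hj)) (hint i hi (j-1) (hj2 j hj)),
      hmean i hi j (hj1 j hj), hmean i hi (j-1) (hj2 j hj)]
  -- sums over the three sets
  have hsub1 : ∀ j, ∀ i ∈ I1 j, i ∈ Icc 1 I := by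
    intro j i hi; rw [hI1] at hi; exact (mem_filter.mp hi).1
  have hsub0 : ∀ j, ∀ i ∈ I0 j, i ∈ Icc 1 I := by
    intro j i hi; rw [hI0] at hi; exact (mem_filter.mp hi).1
  have hsub02 : ∀ j, ∀ i ∈ I0 j ∪ I2 j, i ∈ Icc 1 I := by
    intro j i hi
    rcases mem_union.mp hi with h | h
    · exact hsub0 j i h
    · rw [hI2] at h; exact (mem_filter.mp h).1
  have hsum1 : ∀ j ∈ Icc 2 J,
      ∫ ω, ∑ i ∈ I1 j, D i j ω ∂ℙ = (n1 j : ℝ) * (Ybar j - Ybar (j-1) + β) := by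
    intro j hj
    have hterm : ∀ i ∈ I1 j, ∫ ω, D i j ω ∂ℙ = Ybar j - Ybar (j-1) + β := by
      intro i hi
      rw [hI1 j] at hi
      obtain ⟨hiI, hX1, hX0⟩ := mem_filter.mp hi |>.imp id (fun h => h)
      rw [hDmean j hj i hiI, hX1, hX0]
      simp; ring
    rw [integral_finset_sum _ (fun i hi => hDint j hj i (hsub1 j i hi)),
      Finset.sum_congr rfl hterm, Finset.sum_const, nsmul_eq_mul, hn1 j]
  have hsum0 : ∀ j ∈ Icc 2 J,
      ∫ ω, ∑ i ∈ I0 j, D i j ω ∂ℙ = (n0 j : ℝ) * (Ybar j - Ybar (j-1)) := by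
    intro j hj
    have hterm : ∀ i ∈ I0 j, ∫ ω, D i j ω ∂ℙ = Ybar j - Ybar (j-1) := by
      intro i hi
      rw [hI0 j] at hi
      obtain ⟨hiI, hX1, hX0⟩ := mem_filter.mp hi |>.imp id (fun h => h)
      rw [hDmean j hj i hiI, hX1, hX0]
      simp
    rw [integral_finset_sum _ (fun i hi => hDint j hj i (hsub0 j i hi)),
      Finset.sum_congr rfl hterm, Finset.sum_const, nsmul_eq_mul, hn0 j]
  have hdisj : ∀ j, Disjoint (I0 j) (I2 j) := by
    intro j
    rw [hI0, hI2, Finset.disjoint_left]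
    intro i hi hi'
    simp only [mem_filter] at hi hi'
    simp [hi.2.1] at hi'
  have hsum02 : ∀ j ∈ Icc 2 J,
      ∫ ω, ∑ i ∈ I0 j ∪ I2 j, D i j ω ∂ℙ
        = ((n0 j : ℝ) + n2 j) * (Ybar j - Ybar (j-1)) := by
    intro j hj
    have hterm : ∀ i ∈ I0 j ∪ I2 j, ∫ ω, D i j ω ∂ℙ = Ybar j - Ybar (j-1) := by
      intro i hi
      rcases mem_union.mp hi with h | h
      · rw [hI0 j] at h
        obtain ⟨hiI, hX1, hX0⟩ := mem_filter.mp h |>.imp id (fun h => h)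
        rw [hDmean j hj i hiI, hX1, hX0]; simp
      · rw [hI2 j] at h
        obtain ⟨hiI, hX1, hX0⟩ := mem_filter.mp h |>.imp id (fun h => h)
        rw [hDmean j hj i hiI, hX1, hX0]; simp
    rw [integral_finset_sum _ (fun i hi => hDint j hj i (hsub02 j i hi)),
      Finset.sum_congr rfl hterm, Finset.sum_const, nsmul_eq_mul,
      Finset.card_union_of_disjoint (hdisj j), hn0 j, hn2 j]
    push_cast; ring
  -- integrability of the per-period estimators
  have hint1 : ∀ j ∈ Icc 2 J, Integrable (fun ω => ∑ i ∈ I1 j, D i j ω) ℙ :=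
    fun j hj => integrable_finset_sum _ (fun i hi => hDint j hj i (hsub1 j i hi))
  have hint0 : ∀ j ∈ Icc 2 J, Integrable (fun ω => ∑ i ∈ I0 j, D i j ω) ℙ :=
    fun j hj => integrable_finset_sum _ (fun i hi => hDint j hj i (hsub0 j i hi))
  have hint02 : ∀ j ∈ Icc 2 J, Integrable (fun ω => ∑ i ∈ I0 j ∪ I2 j, D i j ω) ℙ :=
    fun j hj => integrable_finset_sum _ (fun i hi => hDint j hj i (hsub02 j i hi))
  have hβhatint : ∀ j ∈ Icc 2 J, Integrable (βhat j) ℙ := by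
    intro j hj
    have h : βhat j = fun ω => (n1 j : ℝ)⁻¹ * ∑ i ∈ I1 j, D i j ω
        - (n0 j : ℝ)⁻¹ * ∑ i ∈ I0 j, D i j ω := funext fun ω => hβhat j ω
    rw [h]
    exact ((hint1 j hj).const_mul _).sub ((hint0 j hj).const_mul _)
  have hβtildeint : ∀ j ∈ Icc 2 J, Integrable (βtilde j) ℙ := by
    intro j hj
    have h : βtilde j = fun ω => (n1 j : ℝ)⁻¹ * ∑ i ∈ I1 j, D i j ω
        - ((n0 j : ℝ) + n2 j)⁻¹ * ∑ i ∈ I0 j ∪ I2 j, D i j ω := funext fun ω => hβtilde j ω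
    rw [h]
    exact ((hint1 j hj).const_mul _).sub ((hint02 j hj).const_mul _)
  -- per-period unbiasedness
  have hβhatmean : ∀ j ∈ S, ∫ ω, βhat j ω ∂ℙ = β := by
    intro j hj
    rw [hS, mem_filter] at hj
    obtain ⟨hjJ, hn0pos, hn1pos⟩ := hj.imp id (fun h => h)
    have h : βhat j = fun ω => (n1 j : ℝ)⁻¹ * ∑ i ∈ I1 j, D i j ω
        - (n0 j : ℝ)⁻¹ * ∑ i ∈ I0 j, D i j ω := funext fun ω => hβhat j ω
    rw [h, integral_sub ((hint1 j hjJ).const_mul _) ((hint0 j hjJ).const_mul _),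
      integral_const_mul, integral_const_mul, hsum1 j hjJ, hsum0 j hjJ]
    have h1 : (n1 j : ℝ) ≠ 0 := Nat.cast_ne_zero.mpr (by omega)
    have h0 : (n0 j : ℝ) ≠ 0 := Nat.cast_ne_zero.mpr (by omega)
    field_simp
    ring
  have hβtildemean : ∀ j ∈ S', ∫ ω, βtilde j ω ∂ℙ = β := by
    intro j hj
    rw [hS', mem_filter] at hj
    obtain ⟨hjJ, hn1pos, hn02pos⟩ := hj.imp id (fun h => h)
    have h : βtilde j = fun ω => (n1 j : ℝ)⁻¹ * ∑ i ∈ I1 j, D i j ω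
        - ((n0 j : ℝ) + n2 j)⁻¹ * ∑ i ∈ I0 j ∪ I2 j, D i j ω := funext fun ω => hβtilde j ω
    rw [h, integral_sub ((hint1 j hjJ).const_mul _) ((hint02 j hjJ).const_mul _),
      integral_const_mul, integral_const_mul, hsum1 j hjJ, hsum02 j hjJ]
    have h1 : (n1 j : ℝ) ≠ 0 := Nat.cast_ne_zero.mpr (by omega)
    have h02 : (n0 j : ℝ) + n2 j ≠ 0 := by
      have : ((n0 j + n2 j : ℕ) : ℝ) ≠ 0 := Nat.cast_ne_zero.mpr (by omega)
      push_cast at this; exact this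
    field_simp
    ring
  -- generic weighted-average lemma
  have key : ∀ (T : Finset ℕ) (v : ℕ → ℝ) (f : ℕ → Ω → ℝ),
      (∀ j ∈ T, Integrable (f j) ℙ) → (∀ j ∈ T, ∫ ω, f j ω ∂ℙ = β) →
      (0 < ∑ j ∈ T, v j) →
      ∫ ω, ∑ j ∈ T, (v j / ∑ j' ∈ T, v j') * f j ω ∂ℙ = β := by
    intro T v f hfi hfm hpos
    rw [integral_finset_sum _ (fun j hj => (hfi j hj).const_mul _)]
    have : ∀ j ∈ T, ∫ ω, (v j / ∑ j' ∈ T, v j') * f j ω ∂ℙ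
        = (v j / ∑ j' ∈ T, v j') * β := by
      intro j hj; rw [integral_const_mul, hfm j hj]
    rw [Finset.sum_congr rfl this, ← Finset.sum_mul, ← Finset.sum_div,
      div_self (ne_of_gt hpos), one_mul]
  have hSsub : ∀ j ∈ S, j ∈ Icc 2 J := by
    intro j hj; rw [hS, mem_filter] at hj; exact hj.1
  have hS'sub : ∀ j ∈ S', j ∈ Icc 2 J := by
    intro j hj; rw [hS', mem_filter] at hj; exact hj.1
  exact ⟨key S w βhat (fun j hj => hβhatint j (hSsub j hj)) hβhatmean hwpos,
    key S' w' βtilde (fun j hj => hβtildeint j (hS'sub j hj)) hβtildemean hw'pos⟩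
end

section
/- Assume there exist constants Y_{·1},...,Y_{·J} and β such that E[Y_{i,j}] = Y_{·j} whenever X_{i,j} = 0, and E[Y_{i,j}] = Y_{·j} + β whenever X_{i,j} = 1 and X_{i,j−1} = 0 (i.e. a constant additive treatment effect in the first period on treatment, with no assumption on later intervention periods). Then for any deterministic nonnegative weights w_j with positive sum, the controls-only crossover estimator is unbiased: E[β̂] = β. -/
/-! Each period-specific estimator is a difference of two cluster averages of the contrasts
`D i j`. Every cluster counted in `β̂_j` is a control in period `j - 1`, so `E[D i j]` is
`Ybar j - Ybar (j - 1)` for the controls and the same plus `β` for the crossovers; the two averages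
therefore differ in mean by exactly `β`, and a normalized weighted average of unbiased estimators
is unbiased by linearity of the integral. -/

open MeasureTheory ProbabilityTheory Finset

section Mean

variable {Ω ι : Type*} [MeasurableSpace Ω] {μ : Measure Ω}

def HasMean (μ : Measure Ω) (f : Ω → ℝ) (a : ℝ) : Prop :=
  Integrable f μ ∧ ∫ ω, f ω ∂μ = a

namespace HasMean

variable {f g : Ω → ℝ} {a b : ℝ}

theorem sub (hf : HasMean μ f a) (hg : HasMean μ g b) :
    HasMean μ (fun ω => f ω - g ω) (a - b) :=
  ⟨hf.1.sub hg.1, by rw [integral_sub hf.1 hg.1, hf.2, hg.2]⟩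

theorem const_mul (hf : HasMean μ f a) (c : ℝ) : HasMean μ (fun ω => c * f ω) (c * a) :=
  ⟨hf.1.const_mul c, by rw [integral_const_mul, hf.2]⟩

theorem finset_sum {s : Finset ι} {f : ι → Ω → ℝ} {a : ι → ℝ}
    (hf : ∀ i ∈ s, HasMean μ (f i) (a i)) :
    HasMean μ (fun ω => ∑ i ∈ s, f i ω) (∑ i ∈ s, a i) :=
  ⟨integrable_finsetSum s fun i hi => (hf i hi).1, by
    rw [integral_finsetSum s fun i hi => (hf i hi).1]
    exact sum_congr rfl fun i hi => (hf i hi).2⟩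

theorem finset_average {s : Finset ι} (hs : s.Nonempty) {f : ι → Ω → ℝ} {a : ℝ}
    (hf : ∀ i ∈ s, HasMean μ (f i) a) :
    HasMean μ (fun ω => (#s : ℝ)⁻¹ * ∑ i ∈ s, f i ω) a := by
  have hcard : (#s : ℝ) ≠ 0 := Nat.cast_ne_zero.2 hs.card_pos.ne'
  convert (finset_sum hf).const_mul (#s : ℝ)⁻¹ using 1
  rw [sum_const, nsmul_eq_mul, inv_mul_cancel_left₀ hcard]

theorem weighted_average {s : Finset ι} {w : ι → ℝ} (hw : ∑ j ∈ s, w j ≠ 0)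
    {f : ι → Ω → ℝ} {a : ℝ} (hf : ∀ j ∈ s, HasMean μ (f j) a) :
    HasMean μ (fun ω => ∑ j ∈ s, (w j / ∑ j' ∈ s, w j') * f j ω) a := by
  convert finset_sum fun j hj => (hf j hj).const_mul (w j / ∑ j' ∈ s, w j') using 1
  rw [← sum_mul, ← sum_div, div_self hw, one_mul]

end HasMean

end Mean

section SteppedWedge

variable {Ω : Type*} [MeasurableSpace Ω] {μ : Measure Ω}

def controlClusters (X : ℕ → ℕ → Bool) (I j : ℕ) : Finset ℕ :=
  (Icc 1 I).filter fun i => X i j = false ∧ X i (j - 1) = false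

def crossoverClusters (X : ℕ → ℕ → Bool) (I j : ℕ) : Finset ℕ :=
  (Icc 1 I).filter fun i => X i j = true ∧ X i (j - 1) = false

theorem hasMean_crossover_estimator {Y : ℕ → ℕ → Ω → ℝ} {X : ℕ → ℕ → Bool} {Ybar : ℕ → ℝ}
    {β : ℝ} {I J j : ℕ}
    (hint : ∀ i ∈ Icc 1 I, ∀ j ∈ Icc 1 J, Integrable (Y i j) μ)
    (hmean0 : ∀ i ∈ Icc 1 I, ∀ j ∈ Icc 1 J, X i j = false → ∫ ω, Y i j ω ∂μ = Ybar j)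
    (hmean1 : ∀ i ∈ Icc 1 I, ∀ j ∈ Icc 1 J, X i j = true → X i (j - 1) = false →
      ∫ ω, Y i j ω ∂μ = Ybar j + β)
    (hj : j ∈ Icc 2 J) (h0 : (controlClusters X I j).Nonempty)
    (h1 : (crossoverClusters X I j).Nonempty) :
    HasMean μ (fun ω =>
      (#(crossoverClusters X I j) : ℝ)⁻¹ *
          ∑ i ∈ crossoverClusters X I j, (Y i j ω - Y i (j - 1) ω) -
        (#(controlClusters X I j) : ℝ)⁻¹ *
          ∑ i ∈ controlClusters X I j, (Y i j ω - Y i (j - 1) ω)) β := by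
  rw [mem_Icc] at hj
  have hj1 : j ∈ Icc 1 J := mem_Icc.2 ⟨by omega, hj.2⟩
  have hjprev : j - 1 ∈ Icc 1 J := mem_Icc.2 ⟨by omega, by omega⟩
  have prev : ∀ i ∈ Icc 1 I, X i (j - 1) = false → HasMean μ (Y i (j - 1)) (Ybar (j - 1)) :=
    fun i hi hx => ⟨hint i hi _ hjprev, hmean0 i hi _ hjprev hx⟩
  have hcross := HasMean.finset_average (a := Ybar j + β - Ybar (j - 1)) h1 fun i hi => by
    obtain ⟨hi, hx, hxprev⟩ := mem_filter.1 hi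
    exact HasMean.sub ⟨hint i hi j hj1, hmean1 i hi j hj1 hx hxprev⟩ (prev i hi hxprev)
  have hcontrol := HasMean.finset_average (a := Ybar j - Ybar (j - 1)) h0 fun i hi => by
    obtain ⟨hi, hx, hxprev⟩ := mem_filter.1 hi
    exact HasMean.sub ⟨hint i hi j hj1, hmean0 i hi j hj1 hx⟩ (prev i hi hxprev)
  convert hcross.sub hcontrol using 1
  ring

end SteppedWedge

theorem stmt_6_general
    {Ω : Type*} [MeasureSpace Ω]
    (I J : ℕ) (Y : ℕ → ℕ → Ω → ℝ) (X : ℕ → ℕ → Bool) (Ybar : ℕ → ℝ) (β : ℝ)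
    -- outcomes are integrable
    (hint : ∀ i ∈ Icc 1 I, ∀ j ∈ Icc 1 J, Integrable (Y i j) ℙ)
    -- mean structure: control periods, and first period on treatment
    (hmean0 : ∀ i ∈ Icc 1 I, ∀ j ∈ Icc 1 J, X i j = false →
      ∫ ω, Y i j ω ∂ℙ = Ybar j)
    (hmean1 : ∀ i ∈ Icc 1 I, ∀ j ∈ Icc 1 J, X i j = true → X i (j - 1) = false →
      ∫ ω, Y i j ω ∂ℙ = Ybar j + β)
    -- the sets `I_{0,j}`, `I_{1,j}` and their sizes
    (I0 I1 : ℕ → Finset ℕ) (n0 n1 : ℕ → ℕ)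
    (hI0 : ∀ j, I0 j = (Icc 1 I).filter fun i => X i j = false ∧ X i (j - 1) = false)
    (hI1 : ∀ j, I1 j = (Icc 1 I).filter fun i => X i j = true ∧ X i (j - 1) = false)
    (hn0 : ∀ j, n0 j = (I0 j).card) (hn1 : ∀ j, n1 j = (I1 j).card)
    -- consecutive-period contrasts
    (D : ℕ → ℕ → Ω → ℝ) (hD : ∀ i j ω, D i j ω = Y i j ω - Y i (j - 1) ω)
    -- period-specific crossover estimators
    (βhat : ℕ → Ω → ℝ)
    (hβhat : ∀ j ω, βhat j ω =
      (n1 j : ℝ)⁻¹ * ∑ i ∈ I1 j, D i j ω - (n0 j : ℝ)⁻¹ * ∑ i ∈ I0 j, D i j ω)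
    -- the applicable periods
    (S : Finset ℕ)
    (hS : S = (Icc 2 J).filter fun j => 1 ≤ n0 j ∧ 1 ≤ n1 j)
    -- deterministic nonnegative weights with positive sum
    (w : ℕ → ℝ) (hwpos : 0 < ∑ j ∈ S, w j) :
    ∫ ω, ∑ j ∈ S, (w j / ∑ j' ∈ S, w j') * βhat j ω ∂ℙ = β := by
  obtain rfl : I0 = controlClusters X I := funext hI0
  obtain rfl : I1 = crossoverClusters X I := funext hI1
  obtain rfl : D = fun i j ω => Y i j ω - Y i (j - 1) ω := funext₃ hD
  have hβ : ∀ j ∈ S, HasMean ℙ (βhat j) β := by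
    intro j hj
    obtain ⟨hj, hn0j, hn1j⟩ := mem_filter.1 (hS ▸ hj)
    rw [hn0, one_le_card] at hn0j
    rw [hn1, one_le_card] at hn1j
    convert hasMean_crossover_estimator hint hmean0 hmean1 hj hn0j hn1j using 1
    funext ω
    rw [hβhat, hn0, hn1]
  exact (HasMean.weighted_average hwpos.ne' hβ).2

/-- **Unbiasedness of the controls-only crossover estimator (Corollary 4).**
In a stepped wedge trial with clusters `1, …, I` and periods `1, …, J`, intervention indicators
`X i j` nondecreasing in `j`, and integrable outcomes `Y i j` with `E[Y i j] = Ybar j` whenever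
`X i j = 0`, and `E[Y i j] = Ybar j + β` whenever `X i j = 1` and `X i (j-1) = 0` (a constant
additive effect in the first period on treatment, no assumption on later intervention periods),
the controls-only crossover estimator `β̂` is unbiased: `E[β̂] = β`. -/
theorem stmt_6
    {Ω : Type*} [MeasureSpace Ω] [IsProbabilityMeasure (ℙ : Measure Ω)]
    (I J : ℕ) (Y : ℕ → ℕ → Ω → ℝ) (X : ℕ → ℕ → Bool) (Ybar : ℕ → ℝ) (β : ℝ)
    -- intervention indicators are nondecreasing in `j`
    (hXmono : ∀ i, ∀ j j', j ≤ j' → X i j = true → X i j' = true)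
    -- outcomes are integrable
    (hint : ∀ i ∈ Icc 1 I, ∀ j ∈ Icc 1 J, Integrable (Y i j) ℙ)
    -- mean structure: control periods, and first period on treatment
    (hmean0 : ∀ i ∈ Icc 1 I, ∀ j ∈ Icc 1 J, X i j = false →
      ∫ ω, Y i j ω ∂ℙ = Ybar j)
    (hmean1 : ∀ i ∈ Icc 1 I, ∀ j ∈ Icc 1 J, X i j = true → X i (j - 1) = false →
      ∫ ω, Y i j ω ∂ℙ = Ybar j + β)
    -- the sets `I_{0,j}`, `I_{1,j}` and their sizes
    (I0 I1 : ℕ → Finset ℕ) (n0 n1 : ℕ → ℕ)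
    (hI0 : ∀ j, I0 j = (Icc 1 I).filter fun i => X i j = false ∧ X i (j - 1) = false)
    (hI1 : ∀ j, I1 j = (Icc 1 I).filter fun i => X i j = true ∧ X i (j - 1) = false)
    (hn0 : ∀ j, n0 j = (I0 j).card) (hn1 : ∀ j, n1 j = (I1 j).card)
    -- consecutive-period contrasts
    (D : ℕ → ℕ → Ω → ℝ) (hD : ∀ i j ω, D i j ω = Y i j ω - Y i (j - 1) ω)
    -- period-specific crossover estimators
    (βhat : ℕ → Ω → ℝ)
    (hβhat : ∀ j ω, βhat j ω =
      (n1 j : ℝ)⁻¹ * ∑ i ∈ I1 j, D i j ω - (n0 j : ℝ)⁻¹ * ∑ i ∈ I0 j, D i j ω)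
    -- the applicable periods
    (S : Finset ℕ)
    (hS : S = (Icc 2 J).filter fun j => 1 ≤ n0 j ∧ 1 ≤ n1 j)
    -- deterministic nonnegative weights with positive sum
    (w : ℕ → ℝ) (hw : ∀ j ∈ S, 0 ≤ w j) (hwpos : 0 < ∑ j ∈ S, w j) :
    ∫ ω, ∑ j ∈ S, (w j / ∑ j' ∈ S, w j') * βhat j ω ∂ℙ = β :=
  stmt_6_general I J Y X Ybar β hint hmean0 hmean1 I0 I1 n0 n1 hI0 hI1 hn0 hn1 D hD βhat hβhat S hS
    w hwpos
end

section
/- In Setting (B), for all j, k with 2 ≤ j < k ≤ J−1, Cov(A_j, A_k) = τ²·(J−1)/((J−j)(k−1)). -/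
/-!
Subtracting the fixed effects, `A_l` is a constant plus `∑ i, w_l(i) (α_i + ε_{i,l})`, with
`w_l(i) = 1/(l-1)` for `i < l` and `w_l(i) = -1/(J-l)` for `i ≥ l`. For `j ≠ k` the errors
`ε_{i,j}` and `ε_{m,k}` are independent of each other and of the cluster effects, so only the shared
`α_i` contribute: `Cov(A_j, A_k) = τ² ∑ i, w_j(i) w_k(i)`. Splitting the clusters at `j` and `k`,
this sum is `1/(k-1) - (k-j)/((J-j)(k-1)) + 1/(J-j) = (J-1)/((J-j)(k-1))`.
-/

open MeasureTheory ProbabilityTheory Finset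

/-- The covariance of two real random variables (with respect to the ambient
probability measure of a `MeasureSpace`). -/
noncomputable def covar {Ω : Type*} [MeasureSpace Ω] (f g : Ω → ℝ) : ℝ :=
  ∫ ω, (f ω - ∫ x, f x) * (g ω - ∫ x, g x)

namespace ProbabilityTheory

variable {Ω ι κ : Type*} {mΩ : MeasurableSpace Ω} {μ : Measure Ω}

lemma iIndepFun.covariance_eq_ite [DecidableEq ι] {X : ι → Ω → ℝ} (h : iIndepFun X μ) {a b : ι}
    (ha : MemLp (X a) 2 μ) (hb : MemLp (X b) 2 μ) :
    cov[X a, X b; μ] = if a = b then Var[X a; μ] else 0 := by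
  split_ifs with hab
  · subst hab; exact covariance_self ha.aemeasurable
  · exact (h.indepFun hab).covariance_eq_zero ha hb

lemma covariance_fun_sum_mul_of_uncorrelated [IsFiniteMeasure μ] [DecidableEq ι] {s : Finset ι}
    {X Y : ι → Ω → ℝ} {v : ℝ} (a b : ι → ℝ)
    (hX : ∀ i ∈ s, MemLp (X i) 2 μ) (hY : ∀ i ∈ s, MemLp (Y i) 2 μ)
    (hXY : ∀ i ∈ s, ∀ m ∈ s, cov[X i, Y m; μ] = if i = m then v else 0) :
    cov[fun ω ↦ ∑ i ∈ s, a i * X i ω, fun ω ↦ ∑ i ∈ s, b i * Y i ω; μ]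
      = v * ∑ i ∈ s, a i * b i := by
  rw [covariance_fun_sum_fun_sum' (X := fun i ω ↦ a i * X i ω) (Y := fun i ω ↦ b i * Y i ω)
    (fun i hi ↦ (hX i hi).const_mul (a i)) (fun i hi ↦ (hY i hi).const_mul (b i)), mul_sum]
  refine sum_congr rfl fun i hi ↦ ?_
  simp_rw [covariance_const_mul_left, covariance_const_mul_right]
  rw [sum_congr rfl fun m hm ↦ by rw [hXY i hi m hm]]
  simp only [mul_ite, mul_zero, sum_ite_eq, hi, if_true]
  ring

lemma covariance_const_add_sum_mul_of_uncorrelated [IsProbabilityMeasure μ] [DecidableEq ι]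
    {s : Finset ι} {X Y : ι → Ω → ℝ} {v : ℝ} (c d : ℝ) (a b : ι → ℝ)
    (hX : ∀ i ∈ s, MemLp (X i) 2 μ) (hY : ∀ i ∈ s, MemLp (Y i) 2 μ)
    (hXY : ∀ i ∈ s, ∀ m ∈ s, cov[X i, Y m; μ] = if i = m then v else 0) :
    cov[fun ω ↦ c + ∑ i ∈ s, a i * X i ω, fun ω ↦ d + ∑ i ∈ s, b i * Y i ω; μ]
      = v * ∑ i ∈ s, a i * b i := by
  have hint {Z : ι → Ω → ℝ} (e : ι → ℝ) (hZ : ∀ i ∈ s, MemLp (Z i) 2 μ) :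
      Integrable (fun ω ↦ ∑ i ∈ s, e i * Z i ω) μ :=
    integrable_finsetSum _ fun i hi ↦ ((hZ i hi).integrable one_le_two).const_mul _
  rw [covariance_const_add_left (hint a hX), covariance_const_add_right (hint b hY),
    covariance_fun_sum_mul_of_uncorrelated a b hX hY hXY]

abbrev EffectIndex (I : Finset ι) (P : Finset κ) : Type _ :=
  {x : ι ⊕ ι × κ // (∀ i, x = Sum.inl i → i ∈ I) ∧ (∀ i j, x = Sum.inr (i, j) → i ∈ I ∧ j ∈ P)}

lemma covariance_add_add_eq_ite_of_iIndepFun [IsFiniteMeasure μ] [DecidableEq ι]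
    {I : Finset ι} {P : Finset κ} {α : ι → Ω → ℝ} {ε : ι → κ → Ω → ℝ}
    (hindep : iIndepFun (m := fun _ => (inferInstance : MeasurableSpace ℝ))
      (fun x : EffectIndex I P => Sum.elim α (fun q => ε q.1 q.2) x.1) μ)
    {τsq : ℝ} (hVα : ∀ i ∈ I, Var[α i; μ] = τsq)
    (hL2α : ∀ i ∈ I, MemLp (α i) 2 μ) (hL2ε : ∀ i ∈ I, ∀ j ∈ P, MemLp (ε i j) 2 μ)
    {i m : ι} {j k : κ} (hi : i ∈ I) (hm : m ∈ I) (hj : j ∈ P) (hk : k ∈ P) (hjk : j ≠ k) :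
    cov[α i + ε i j, α m + ε m k; μ] = if i = m then τsq else 0 := by
  classical
  have hL2 : ∀ x : EffectIndex I P, MemLp (Sum.elim α (fun q => ε q.1 q.2) x.1) 2 μ := by
    rintro ⟨(i | ⟨i, j⟩), hx⟩
    · exact hL2α i (hx.1 i rfl)
    · exact hL2ε i (hx.2 i j rfl).1 j (hx.2 i j rfl).2
  have hcov := fun x y ↦ hindep.covariance_eq_ite (hL2 x) (hL2 y)
  have hαα := hcov ⟨.inl i, by simpa using hi⟩ ⟨.inl m, by simpa using hm⟩
  have hαε := hcov ⟨.inl i, by simpa using hi⟩ ⟨.inr (m, k), by simp [hm, hk]⟩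
  have hεα := hcov ⟨.inr (i, j), by simp [hi, hj]⟩ ⟨.inl m, by simpa using hm⟩
  have hεε := hcov ⟨.inr (i, j), by simp [hi, hj]⟩ ⟨.inr (m, k), by simp [hm, hk]⟩
  simp only [Sum.elim_inl, Sum.elim_inr, Subtype.mk.injEq, Sum.inl.injEq, Sum.inr.injEq,
    Prod.mk.injEq, reduceCtorEq, hjk, and_false, if_false] at hαα hαε hεα hεε
  rw [covariance_add_left (hL2α i hi) (hL2ε i hi j hj) ((hL2α m hm).add (hL2ε m hm k hk)),
    covariance_add_right (hL2α i hi) (hL2α m hm) (hL2ε m hm k hk),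
    covariance_add_right (hL2ε i hi j hj) (hL2α m hm) (hL2ε m hm k hk), hαα, hαε, hεα, hεε]
  simp only [hVα i hi, add_zero]

end ProbabilityTheory

noncomputable def contrastWeight (J l i : ℕ) : ℝ :=
  if i < l then ((l : ℝ) - 1)⁻¹ else -((J : ℝ) - l)⁻¹

lemma contrast_eq_sum_contrastWeight {J l : ℕ} (hl : 1 ≤ l) (hlJ : l ≤ J) (f : ℕ → ℝ) :
    ((l : ℝ) - 1)⁻¹ * ∑ i ∈ Icc 1 (l - 1), f i - ((J : ℝ) - l)⁻¹ * ∑ i ∈ Icc l (J - 1), f i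
      = ∑ i ∈ Ico 1 J, contrastWeight J l i * f i := by
  rw [Icc_sub_one_right_eq_Ico_of_not_isMin (by simp; omega),
    Icc_sub_one_right_eq_Ico_of_not_isMin (by simp; omega), ← sum_Ico_consecutive _ hl hlJ,
    mul_sum, mul_sum, sub_eq_add_neg, ← sum_neg_distrib]
  congr 1 <;> refine sum_congr rfl fun i hi ↦ ?_ <;> rw [mem_Ico] at hi
  · simp [contrastWeight, hi.2]
  · simp [contrastWeight, hi.1.not_gt]

lemma sum_contrastWeight_mul_contrastWeight {J j k : ℕ} (hj : 2 ≤ j) (hjk : j < k) (hkJ : k < J) :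
    ∑ i ∈ Ico 1 J, contrastWeight J j i * contrastWeight J k i
      = ((J : ℝ) - 1) / (((J : ℝ) - j) * ((k : ℝ) - 1)) := by
  have hjR : (2 : ℝ) ≤ j := by exact_mod_cast hj
  have hjkR : (j : ℝ) < k := by exact_mod_cast hjk
  have hkJR : (k : ℝ) < J := by exact_mod_cast hkJ
  have hbelow : ∀ i ∈ Ico 1 j, contrastWeight J j i * contrastWeight J k i
      = ((j : ℝ) - 1)⁻¹ * ((k : ℝ) - 1)⁻¹ := fun i hi ↦ by
    rw [mem_Ico] at hi; simp [contrastWeight, hi.2, hi.2.trans hjk]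
  have hbetween : ∀ i ∈ Ico j k, contrastWeight J j i * contrastWeight J k i
      = -((J : ℝ) - j)⁻¹ * ((k : ℝ) - 1)⁻¹ := fun i hi ↦ by
    rw [mem_Ico] at hi; simp [contrastWeight, hi.1.not_gt, hi.2]
  have habove : ∀ i ∈ Ico k J, contrastWeight J j i * contrastWeight J k i
      = -((J : ℝ) - j)⁻¹ * -((J : ℝ) - k)⁻¹ := fun i hi ↦ by
    rw [mem_Ico] at hi; simp [contrastWeight, (hjk.trans_le hi.1).not_gt, hi.1.not_gt]
  rw [← sum_Ico_consecutive _ (by omega : 1 ≤ j) (hjk.le.trans hkJ.le),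
    ← sum_Ico_consecutive _ hjk.le hkJ.le, sum_congr rfl hbelow, sum_congr rfl hbetween,
    sum_congr rfl habove]
  simp only [sum_const, Nat.card_Ico, nsmul_eq_mul]
  rw [Nat.cast_sub (by omega), Nat.cast_sub hjk.le, Nat.cast_sub hkJ.le, Nat.cast_one]
  have : (j : ℝ) - 1 ≠ 0 := by linarith
  have : (k : ℝ) - 1 ≠ 0 := by linarith
  have : (J : ℝ) - j ≠ 0 := by linarith
  have : (J : ℝ) - k ≠ 0 := by linarith
  field_simp
  ring

theorem stmt_8_general
    {Ω : Type*} [MeasureSpace Ω] [IsProbabilityMeasure (ℙ : Measure Ω)]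
    (J : ℕ)
    (μc β τsq : ℝ) (θ : ℕ → ℝ)
    (α : ℕ → Ω → ℝ) (ε : ℕ → ℕ → Ω → ℝ)
    -- the random variables {α_i} ∪ {ε_{i,j}} are mutually independent
    (hindep : iIndepFun (m := fun _ => (inferInstance : MeasurableSpace ℝ))
      (fun x : {x : ℕ ⊕ ℕ × ℕ // (∀ i, x = Sum.inl i → i ∈ Icc 1 (J - 1)) ∧
          (∀ i j, x = Sum.inr (i, j) → i ∈ Icc 1 (J - 1) ∧ j ∈ Icc 1 J)} =>
        Sum.elim α (fun q => ε q.1 q.2) x.1) ℙ)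
    -- moment assumptions
    (hVα : ∀ i ∈ Icc 1 (J - 1), variance (α i) ℙ = τsq)
    (hL2α : ∀ i ∈ Icc 1 (J - 1), MemLp (α i) 2 ℙ)
    (hL2ε : ∀ i ∈ Icc 1 (J - 1), ∀ j ∈ Icc 1 J, MemLp (ε i j) 2 ℙ)
    -- the mixed effects model: cluster i is on intervention in periods j > i
    (Y : ℕ → ℕ → Ω → ℝ)
    (hY : ∀ i j ω, Y i j ω = μc + α i ω + θ j + (if i < j then β else 0) + ε i j ω)
    -- the within-period contrast A_j
    (A : ℕ → Ω → ℝ)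
    (hA : ∀ j ω, A j ω = ((j : ℝ) - 1)⁻¹ * ∑ i ∈ Icc 1 (j - 1), Y i j ω
        - ((J : ℝ) - (j : ℝ))⁻¹ * ∑ i ∈ Icc j (J - 1), Y i j ω)
    (j k : ℕ) (hj : j ∈ Icc 2 (J - 1)) (hk : k ∈ Icc 2 (J - 1)) (hjk : j < k) :
    covar (A j) (A k)
      = τsq * ((J : ℝ) - 1) / (((J : ℝ) - (j : ℝ)) * ((k : ℝ) - 1)) := by
  obtain ⟨hj2, hjJ⟩ := mem_Icc.mp hj
  obtain ⟨hk2, hkJ⟩ := mem_Icc.mp hk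
  have hcluster : ∀ {i}, i ∈ Ico 1 J → i ∈ Icc 1 (J - 1) := fun hi ↦ by
    rw [mem_Ico] at hi; rw [mem_Icc]; omega
  have hZ : ∀ l ∈ Icc 1 J, ∀ i ∈ Ico 1 J, MemLp (α i + ε i l) 2 ℙ :=
    fun l hl i hi ↦ (hL2α i (hcluster hi)).add (hL2ε i (hcluster hi) l hl)
  have hA_eq : ∀ l, 1 ≤ l → l ≤ J → A l = fun ω ↦
      (∑ i ∈ Ico 1 J, contrastWeight J l i * (μc + θ l + if i < l then β else 0))
        + ∑ i ∈ Ico 1 J, contrastWeight J l i * (α i + ε i l) ω := fun l hl hlJ ↦ by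
    funext ω
    rw [hA, contrast_eq_sum_contrastWeight hl hlJ, ← sum_add_distrib]
    refine sum_congr rfl fun i _ ↦ ?_
    rw [hY, Pi.add_apply]
    ring
  have hj' : j ∈ Icc 1 J := mem_Icc.mpr ⟨by omega, by omega⟩
  have hk' : k ∈ Icc 1 J := mem_Icc.mpr ⟨by omega, by omega⟩
  have hZZ : ∀ i ∈ Ico 1 J, ∀ m ∈ Ico 1 J,
      cov[α i + ε i j, α m + ε m k] = if i = m then τsq else 0 := fun i hi m hm ↦
    covariance_add_add_eq_ite_of_iIndepFun hindep hVα hL2α hL2ε (hcluster hi) (hcluster hm) hj' hk'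
      hjk.ne
  change cov[A j, A k] = _
  rw [hA_eq j (by omega) (by omega), hA_eq k (by omega) (by omega),
    covariance_const_add_sum_mul_of_uncorrelated _ _ _ _ (hZ j hj') (hZ k hk') hZZ,
    sum_contrastWeight_mul_contrastWeight hj2 hjk (by omega), mul_div_assoc]

/-- **Covariance of the within-period contrasts `A_j`, `A_k` (`j < k`) in Setting (B).** -/
theorem stmt_8
    {Ω : Type*} [MeasureSpace Ω] [IsProbabilityMeasure (ℙ : Measure Ω)]
    (J : ℕ) (hJ : 3 ≤ J)
    (μc β τsq : ℝ) (θ : ℕ → ℝ) (σsq : ℕ → ℕ → ℝ)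
    (α : ℕ → Ω → ℝ) (ε : ℕ → ℕ → Ω → ℝ)
    (hmα : ∀ i, Measurable (α i)) (hmε : ∀ i j, Measurable (ε i j))
    -- the random variables {α_i} ∪ {ε_{i,j}} are mutually independent
    (hindep : iIndepFun (m := fun _ => (inferInstance : MeasurableSpace ℝ))
      (fun x : {x : ℕ ⊕ ℕ × ℕ // (∀ i, x = Sum.inl i → i ∈ Icc 1 (J - 1)) ∧
          (∀ i j, x = Sum.inr (i, j) → i ∈ Icc 1 (J - 1) ∧ j ∈ Icc 1 J)} =>
        Sum.elim α (fun q => ε q.1 q.2) x.1) ℙ)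
    -- moment assumptions
    (hEα : ∀ i ∈ Icc 1 (J - 1), ∫ ω, α i ω ∂ℙ = 0)
    (hVα : ∀ i ∈ Icc 1 (J - 1), variance (α i) ℙ = τsq)
    (hL2α : ∀ i ∈ Icc 1 (J - 1), MemLp (α i) 2 ℙ)
    (hEε : ∀ i ∈ Icc 1 (J - 1), ∀ j ∈ Icc 1 J, ∫ ω, ε i j ω ∂ℙ = 0)
    (hVε : ∀ i ∈ Icc 1 (J - 1), ∀ j ∈ Icc 1 J, variance (ε i j) ℙ = σsq i j)
    (hL2ε : ∀ i ∈ Icc 1 (J - 1), ∀ j ∈ Icc 1 J, MemLp (ε i j) 2 ℙ)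
    -- the mixed effects model: cluster i is on intervention in periods j > i
    (Y : ℕ → ℕ → Ω → ℝ)
    (hY : ∀ i j ω, Y i j ω = μc + α i ω + θ j + (if i < j then β else 0) + ε i j ω)
    -- the within-period contrast A_j
    (A : ℕ → Ω → ℝ)
    (hA : ∀ j ω, A j ω = ((j : ℝ) - 1)⁻¹ * ∑ i ∈ Icc 1 (j - 1), Y i j ω
        - ((J : ℝ) - (j : ℝ))⁻¹ * ∑ i ∈ Icc j (J - 1), Y i j ω)
    (j k : ℕ) (hj : j ∈ Icc 2 (J - 1)) (hk : k ∈ Icc 2 (J - 1)) (hjk : j < k) :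
    covar (A j) (A k)
      = τsq * ((J : ℝ) - 1) / (((J : ℝ) - (j : ℝ)) * ((k : ℝ) - 1)) :=
  stmt_8_general J μc β τsq θ α ε hindep hVα hL2α hL2ε Y hY A hA j k hj hk hjk
end

section
/- In Setting (B), for any deterministic constants v_2,...,v_{J−1}, the non-parametric within-period estimator β̂^NPWP = Σ_{j=2}^{J−1} v_j·A_j satisfies Var(β̂^NPWP) = Σ_{j=2}^{J−1} v_j²·[τ²·(J−1)/((J−j)(j−1)) + (Σ_{i=1}^{j−1} σ²_{i,j})/(j−1)² + (Σ_{i=j}^{J−1} σ²_{i,j})/(J−j)²] + 2·Σ_{j=2}^{J−2} Σ_{k=j+1}^{J−1} v_j·v_k·τ²·(J−1)/((J−j)(k−1)). -/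
open MeasureTheory ProbabilityTheory Finset

lemma variance_fun_const_add' {Ω : Type*} [MeasureSpace Ω]
    [IsProbabilityMeasure (ℙ : Measure Ω)] (C : ℝ) (f : Ω → ℝ)
    (hf : Integrable f ℙ) :
    variance (fun ω => C + f ω) ℙ = variance f ℙ := by
  have hI : (∫ x, (C + f x) ∂ℙ) = C + ∫ x, f x ∂ℙ := by
    rw [integral_add (integrable_const C) hf, integral_const]
    simp
  have hpt : ∀ ω, (C + f ω) - ∫ x, (C + f x) ∂ℙ = f ω - ∫ x, f x ∂ℙ := by
    intro ω; rw [hI]; ring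
  rw [variance, variance]
  congr 1
  rw [evariance, evariance]
  apply lintegral_congr
  intro ω
  rw [hpt ω]

lemma sum_Icc_cut' (f : ℕ → ℝ) {a b c : ℕ} (h1 : a ≤ b) (hb : 1 ≤ b) (h2 : b ≤ c + 1) :
    ∑ i ∈ Icc a c, f i = ∑ i ∈ Icc a (b - 1), f i + ∑ i ∈ Icc b c, f i := by
  have he : Icc a c = Icc a (b - 1) ∪ Icc b c := by
    ext x; simp only [mem_Icc, mem_union]; omega
  rw [he, Finset.sum_union]
  rw [Finset.disjoint_left]
  intro x hx hx'
  simp only [mem_Icc] at hx hx'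
  omega

lemma sum_Icc_three' (f : ℕ → ℝ) {a j c : ℕ} (h1 : a ≤ j) (h2 : j ≤ c) (h3 : 1 ≤ a) :
    ∑ k ∈ Icc a c, f k
      = ∑ k ∈ Icc a (j - 1), f k + f j + ∑ k ∈ Icc (j + 1) c, f k := by
  rw [sum_Icc_cut' f h1 (le_trans h3 h1) (by omega)]
  have : ∑ i ∈ Icc j c, f i = f j + ∑ k ∈ Icc (j+1) c, f k := by
    rw [sum_Icc_cut' f (by omega : j ≤ j + 1) (by omega) (by omega)]
    simp only [Nat.add_sub_cancel, Finset.Icc_self, Finset.sum_singleton]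
  rw [this]; ring

/-- **Variance of the non-parametric within-period estimator in Setting (B).** -/
theorem stmt_9
    {Ω : Type*} [MeasureSpace Ω] [IsProbabilityMeasure (ℙ : Measure Ω)]
    (J : ℕ) (hJ : 3 ≤ J)
    (μc β τsq : ℝ) (θ : ℕ → ℝ) (σsq : ℕ → ℕ → ℝ)
    (α : ℕ → Ω → ℝ) (ε : ℕ → ℕ → Ω → ℝ)
    (hmα : ∀ i, Measurable (α i)) (hmε : ∀ i j, Measurable (ε i j))
    -- the random variables {α_i} ∪ {ε_{i,j}} are mutually independent
    (hindep : iIndepFun (m := fun _ => (inferInstance : MeasurableSpace ℝ))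
      (fun x : {x : ℕ ⊕ ℕ × ℕ // (∀ i, x = Sum.inl i → i ∈ Icc 1 (J - 1)) ∧
          (∀ i j, x = Sum.inr (i, j) → i ∈ Icc 1 (J - 1) ∧ j ∈ Icc 1 J)} =>
        Sum.elim α (fun q => ε q.1 q.2) x.1) ℙ)
    -- moment assumptions
    (hEα : ∀ i ∈ Icc 1 (J - 1), ∫ ω, α i ω ∂ℙ = 0)
    (hVα : ∀ i ∈ Icc 1 (J - 1), variance (α i) ℙ = τsq)
    (hL2α : ∀ i ∈ Icc 1 (J - 1), MemLp (α i) 2 ℙ)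
    (hEε : ∀ i ∈ Icc 1 (J - 1), ∀ j ∈ Icc 1 J, ∫ ω, ε i j ω ∂ℙ = 0)
    (hVε : ∀ i ∈ Icc 1 (J - 1), ∀ j ∈ Icc 1 J, variance (ε i j) ℙ = σsq i j)
    (hL2ε : ∀ i ∈ Icc 1 (J - 1), ∀ j ∈ Icc 1 J, MemLp (ε i j) 2 ℙ)
    -- the mixed effects model: cluster i is on intervention in periods j > i
    (Y : ℕ → ℕ → Ω → ℝ)
    (hY : ∀ i j ω, Y i j ω = μc + α i ω + θ j + (if i < j then β else 0) + ε i j ω)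
    -- the within-period contrast A_j
    (A : ℕ → Ω → ℝ)
    (hA : ∀ j ω, A j ω = ((j : ℝ) - 1)⁻¹ * ∑ i ∈ Icc 1 (j - 1), Y i j ω
        - ((J : ℝ) - (j : ℝ))⁻¹ * ∑ i ∈ Icc j (J - 1), Y i j ω)
    -- the non-parametric within-period estimator with deterministic weights v
    (v : ℕ → ℝ) (βNPWP : Ω → ℝ)
    (hNPWP : ∀ ω, βNPWP ω = ∑ j ∈ Icc 2 (J - 1), v j * A j ω)
    :
    variance βNPWP ℙ
      = ∑ j ∈ Icc 2 (J - 1), (v j) ^ 2 *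
          (τsq * ((J : ℝ) - 1) / (((J : ℝ) - (j : ℝ)) * ((j : ℝ) - 1))
        + (∑ i ∈ Icc 1 (j - 1), σsq i j) / ((j : ℝ) - 1) ^ 2
        + (∑ i ∈ Icc j (J - 1), σsq i j) / ((J : ℝ) - (j : ℝ)) ^ 2)
        + 2 * ∑ j ∈ Icc 2 (J - 2), ∑ k ∈ Icc (j + 1) (J - 1),
            v j * v k * (τsq * ((J : ℝ) - 1) / (((J : ℝ) - (j : ℝ)) * ((k : ℝ) - 1))) := by
  classical
  -- coefficients
  set cc : ℕ → ℕ → ℝ := fun i j => if i < j then ((j : ℝ) - 1)⁻¹ else -(((J : ℝ) - (j : ℝ))⁻¹)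
    with hcc
  set w : ℕ → ℝ := fun i => ∑ j ∈ Icc 2 (J - 1), v j * cc i j with hw
  set D : ℕ → ℝ := fun j => ((j : ℝ) - 1)⁻¹ * (∑ _i ∈ Icc 1 (j - 1), (μc + θ j + β))
      - ((J : ℝ) - (j : ℝ))⁻¹ * (∑ _i ∈ Icc j (J - 1), (μc + θ j)) with hD
  set C : ℝ := ∑ j ∈ Icc 2 (J - 1), v j * D j with hC
  set X : ℕ ⊕ ℕ × ℕ → Ω → ℝ := Sum.elim α (fun q => ε q.1 q.2) with hX
  set coef : ℕ ⊕ ℕ × ℕ → ℝ := Sum.elim w (fun q => v q.2 * cc q.1 q.2) with hcoef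
  set S : Finset (ℕ ⊕ ℕ × ℕ) :=
    ((Icc 1 (J - 1)).image Sum.inl) ∪ (((Icc 1 (J - 1)) ×ˢ (Icc 2 (J - 1))).image Sum.inr)
    with hS
  -- decomposition of A j
  have hAj : ∀ j ∈ Icc 2 (J - 1), ∀ ω,
      A j ω = D j + ∑ i ∈ Icc 1 (J - 1), cc i j * (α i ω + ε i j ω) := by
    intro j hj ω
    rw [mem_Icc] at hj
    rw [hA]
    rw [sum_Icc_cut' (fun i => cc i j * (α i ω + ε i j ω)) (by omega : 1 ≤ j) (by omega)
      (by omega : j ≤ J - 1 + 1)]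
    have e1 : ∀ i ∈ Icc 1 (j - 1), cc i j * (α i ω + ε i j ω)
        = ((j : ℝ) - 1)⁻¹ * (α i ω + ε i j ω) := by
      intro i hi; rw [mem_Icc] at hi
      have : i < j := by omega
      simp [hcc, this]
    have e2 : ∀ i ∈ Icc j (J - 1), cc i j * (α i ω + ε i j ω)
        = -(((J : ℝ) - (j : ℝ))⁻¹) * (α i ω + ε i j ω) := by
      intro i hi; rw [mem_Icc] at hi
      have : ¬ i < j := by omega
      simp [hcc, this]
    rw [Finset.sum_congr rfl e1, Finset.sum_congr rfl e2, ← Finset.mul_sum, ← Finset.mul_sum]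
    have f1 : ∀ i ∈ Icc 1 (j - 1), Y i j ω = (μc + θ j + β) + (α i ω + ε i j ω) := by
      intro i hi; rw [mem_Icc] at hi
      rw [hY, if_pos (by omega : i < j)]; ring
    have f2 : ∀ i ∈ Icc j (J - 1), Y i j ω = (μc + θ j) + (α i ω + ε i j ω) := by
      intro i hi; rw [mem_Icc] at hi
      rw [hY, if_neg (by omega : ¬ i < j)]; ring
    rw [Finset.sum_congr rfl f1, Finset.sum_congr rfl f2, hD]
    simp only [Finset.sum_add_distrib]
    ring
  -- disjointness
  have hdisj : Disjoint ((Icc 1 (J - 1)).image Sum.inl)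
      (((Icc 1 (J - 1)) ×ˢ (Icc 2 (J - 1))).image Sum.inr) := by
    rw [Finset.disjoint_left]
    rintro x hx hx'
    rw [Finset.mem_image] at hx hx'
    obtain ⟨i, _, rfl⟩ := hx
    obtain ⟨p, _, hp⟩ := hx'
    exact Sum.inr_ne_inl hp
  -- evaluation of sums over S
  have hSsum : ∀ ω, ∑ s ∈ S, coef s * X s ω
      = (∑ i ∈ Icc 1 (J - 1), w i * α i ω)
        + ∑ p ∈ (Icc 1 (J - 1)) ×ˢ (Icc 2 (J - 1)), (v p.2 * cc p.1 p.2) * ε p.1 p.2 ω := by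
    intro ω
    rw [hS, Finset.sum_union hdisj,
      Finset.sum_image (fun a _ b _ h => Sum.inl_injective h),
      Finset.sum_image (fun a _ b _ h => Sum.inr_injective h)]
    rfl
  -- pointwise decomposition of the estimator
  have hpt : βNPWP = fun ω => C + ∑ s ∈ S, coef s * X s ω := by
    funext ω
    rw [hNPWP, hSsum ω, Finset.sum_product]
    rw [Finset.sum_comm (s := Icc 1 (J - 1)) (t := Icc 2 (J - 1))]
    have e1 : ∀ i ∈ Icc 1 (J - 1), w i * α i ω
        = ∑ j ∈ Icc 2 (J - 1), (v j * cc i j) * α i ω := by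
      intro i _
      rw [hw, Finset.sum_mul]
    rw [Finset.sum_congr rfl e1,
      Finset.sum_comm (s := Icc 1 (J - 1)) (t := Icc 2 (J - 1)), hC,
      ← Finset.sum_add_distrib, ← Finset.sum_add_distrib]
    apply Finset.sum_congr rfl
    intro j hj
    rw [hAj j hj ω, mul_add, Finset.mul_sum, ← Finset.sum_add_distrib]
    congr 1
    apply Finset.sum_congr rfl
    intro i _
    ring
  -- membership properties of elements of S
  have hprop : ∀ s ∈ S, (∀ i, s = Sum.inl i → i ∈ Icc 1 (J - 1)) ∧
      (∀ i j, s = Sum.inr (i, j) → i ∈ Icc 1 (J - 1) ∧ j ∈ Icc 1 J) := by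
    intro s hs
    rw [hS, Finset.mem_union] at hs
    rcases hs with hs | hs
    · rw [Finset.mem_image] at hs
      obtain ⟨i, hi, rfl⟩ := hs
      refine ⟨fun i' h => ?_, fun i' j' h => absurd h Sum.inl_ne_inr⟩
      rw [Sum.inl.injEq] at h; subst h; exact hi
    · rw [Finset.mem_image] at hs
      obtain ⟨⟨i, j⟩, hij, rfl⟩ := hs
      rw [Finset.mem_product] at hij
      refine ⟨fun i' h => absurd h Sum.inr_ne_inl, fun i' j' h => ?_⟩
      rw [Sum.inr.injEq, Prod.mk.injEq] at h
      obtain ⟨rfl, rfl⟩ := h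
      refine ⟨hij.1, ?_⟩
      have := hij.2
      rw [mem_Icc] at this ⊢
      omega
  -- L² membership
  have hL2 : ∀ s ∈ S, MemLp (X s) 2 ℙ := by
    intro s hs
    have h := hprop s hs
    rcases s with i | ⟨i, j⟩
    · exact hL2α i (h.1 i rfl)
    · obtain ⟨h1, h2⟩ := h.2 i j rfl
      exact hL2ε i h1 j h2
  -- variances
  have hVar : ∀ s ∈ S, variance (X s) ℙ
      = Sum.elim (fun _ => τsq) (fun q => σsq q.1 q.2) s := by
    intro s hs
    have h := hprop s hs
    rcases s with i | ⟨i, j⟩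
    · exact hVα i (h.1 i rfl)
    · obtain ⟨h1, h2⟩ := h.2 i j rfl
      exact hVε i h1 j h2
  -- pairwise independence
  have hpair : (↑S : Set (ℕ ⊕ ℕ × ℕ)).Pairwise
      (fun s t => IndepFun (fun ω => coef s * X s ω) (fun ω => coef t * X t ω) ℙ) := by
    intro s hs t ht hst
    rw [Finset.mem_coe] at hs ht
    have hbase : IndepFun (X s) (X t) ℙ := by
      have := hindep.indepFun (i := ⟨s, hprop s hs⟩) (j := ⟨t, hprop t ht⟩)
        (by simpa [Subtype.ext_iff] using hst)
      exact this
    exact hbase.comp (measurable_id.const_mul (coef s)) (measurable_id.const_mul (coef t))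
  -- compute the variance
  have hvar1 : variance βNPWP ℙ = ∑ s ∈ S, coef s ^ 2 * variance (X s) ℙ := by
    rw [hpt]
    rw [variance_fun_const_add' C _ (integrable_finset_sum S (fun s hs =>
      ((hL2 s hs).const_mul (coef s)).integrable one_le_two))]
    have : (fun ω => ∑ s ∈ S, coef s * X s ω) = ∑ s ∈ S, (fun ω => coef s * X s ω) := by
      funext ω; rw [Finset.sum_apply]
    rw [this, IndepFun.variance_sum (fun s hs => (hL2 s hs).const_mul (coef s)) hpair]
    exact Finset.sum_congr rfl fun s _ => variance_const_mul (coef s) (X s) ℙ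
  rw [hvar1]
  -- evaluate the sum over S
  have hvar2 : ∑ s ∈ S, coef s ^ 2 * variance (X s) ℙ
      = (∑ i ∈ Icc 1 (J - 1), w i ^ 2 * τsq)
        + ∑ j ∈ Icc 2 (J - 1), ∑ i ∈ Icc 1 (J - 1), (v j * cc i j) ^ 2 * σsq i j := by
    rw [Finset.sum_congr rfl (fun s hs => by rw [hVar s hs])]
    rw [hS, Finset.sum_union hdisj,
      Finset.sum_image (fun a _ b _ h => Sum.inl_injective h),
      Finset.sum_image (fun a _ b _ h => Sum.inr_injective h)]
    congr 1
    rw [Finset.sum_product]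
    rw [Finset.sum_comm (s := Icc 1 (J - 1)) (t := Icc 2 (J - 1))]
    rfl
  rw [hvar2]
  -- nonvanishing denominators
  have hne1 : ∀ j : ℕ, 2 ≤ j → ((j : ℝ) - 1) ≠ 0 := by
    intro j hj
    have : (2 : ℝ) ≤ (j : ℝ) := by exact_mod_cast hj
    intro h; nlinarith
  have hne2 : ∀ j : ℕ, j ≤ J - 1 → ((J : ℝ) - (j : ℝ)) ≠ 0 := by
    intro j hj
    have : (j : ℝ) < (J : ℝ) := by exact_mod_cast (by omega : j < J)
    intro h; nlinarith
  -- the key covariance-coefficient sum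
  have hG : ∀ j k : ℕ, 2 ≤ j → j ≤ k → k ≤ J - 1 →
      ∑ i ∈ Icc 1 (J - 1), cc i j * cc i k
        = ((J : ℝ) - 1) / (((J : ℝ) - (j : ℝ)) * ((k : ℝ) - 1)) := by
    intro j k h2 hjk hk
    rw [sum_Icc_cut' (fun i => cc i j * cc i k) (by omega : 1 ≤ j) (by omega)
      (by omega : j ≤ J - 1 + 1)]
    rw [sum_Icc_cut' (fun i => cc i j * cc i k) hjk (by omega) (by omega : k ≤ J - 1 + 1)]
    have e1 : ∀ i ∈ Icc 1 (j - 1), cc i j * cc i k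
        = ((j : ℝ) - 1)⁻¹ * ((k : ℝ) - 1)⁻¹ := by
      intro i hi; rw [mem_Icc] at hi
      have h1 : i < j := by omega
      have h2' : i < k := by omega
      simp [hcc, h1, h2']
    have e2 : ∀ i ∈ Icc j (k - 1), cc i j * cc i k
        = -(((J : ℝ) - (j : ℝ))⁻¹) * ((k : ℝ) - 1)⁻¹ := by
      intro i hi; rw [mem_Icc] at hi
      have h1 : ¬ i < j := by omega
      have h2' : i < k := by omega
      simp [hcc, h1, h2']
    have e3 : ∀ i ∈ Icc k (J - 1), cc i j * cc i k
        = -(((J : ℝ) - (j : ℝ))⁻¹) * -(((J : ℝ) - (k : ℝ))⁻¹) := by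
      intro i hi; rw [mem_Icc] at hi
      have h1 : ¬ i < j := by omega
      have h2' : ¬ i < k := by omega
      simp [hcc, h1, h2']
    rw [Finset.sum_congr rfl e1, Finset.sum_congr rfl e2, Finset.sum_congr rfl e3,
      Finset.sum_const, Finset.sum_const, Finset.sum_const, Nat.card_Icc, Nat.card_Icc,
      Nat.card_Icc, nsmul_eq_mul, nsmul_eq_mul, nsmul_eq_mul]
    have n1 : ((j - 1 + 1 - 1 : ℕ) : ℝ) = (j : ℝ) - 1 := by
      rw [show j - 1 + 1 - 1 = j - 1 from by omega, Nat.cast_sub (by omega : 1 ≤ j),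
        Nat.cast_one]
    have n2 : ((k - 1 + 1 - j : ℕ) : ℝ) = (k : ℝ) - (j : ℝ) := by
      rw [show k - 1 + 1 - j = k - j from by omega, Nat.cast_sub hjk]
    have n3 : ((J - 1 + 1 - k : ℕ) : ℝ) = (J : ℝ) - (k : ℝ) := by
      rw [show J - 1 + 1 - k = J - k from by omega, Nat.cast_sub (by omega : k ≤ J)]
    rw [n1, n2, n3]
    have d1 := hne1 j h2
    have d2 := hne1 k (by omega)
    have d3 := hne2 j (by omega)
    have d4 := hne2 k hk
    field_simp
    ring
  -- the idiosyncratic part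
  have Hε : ∀ j ∈ Icc 2 (J - 1), ∑ i ∈ Icc 1 (J - 1), (v j * cc i j) ^ 2 * σsq i j
      = v j ^ 2 * ((∑ i ∈ Icc 1 (j - 1), σsq i j) / ((j : ℝ) - 1) ^ 2)
        + v j ^ 2 * ((∑ i ∈ Icc j (J - 1), σsq i j) / ((J : ℝ) - (j : ℝ)) ^ 2) := by
    intro j hj
    rw [mem_Icc] at hj
    rw [sum_Icc_cut' (fun i => (v j * cc i j) ^ 2 * σsq i j) (by omega : 1 ≤ j) (by omega)
      (by omega : j ≤ J - 1 + 1)]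
    have e1 : ∀ i ∈ Icc 1 (j - 1), (v j * cc i j) ^ 2 * σsq i j
        = v j ^ 2 / ((j : ℝ) - 1) ^ 2 * σsq i j := by
      intro i hi; rw [mem_Icc] at hi
      have h1 : i < j := by omega
      simp only [hcc, if_pos h1]
      rw [mul_pow, inv_pow]
      ring
    have e2 : ∀ i ∈ Icc j (J - 1), (v j * cc i j) ^ 2 * σsq i j
        = v j ^ 2 / ((J : ℝ) - (j : ℝ)) ^ 2 * σsq i j := by
      intro i hi; rw [mem_Icc] at hi
      have h1 : ¬ i < j := by omega
      simp only [hcc, if_neg h1]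
      rw [mul_pow, neg_sq, inv_pow]
      ring
    rw [Finset.sum_congr rfl e1, Finset.sum_congr rfl e2, ← Finset.mul_sum, ← Finset.mul_sum]
    ring
  -- the cluster-effect part
  have Hα : ∑ i ∈ Icc 1 (J - 1), w i ^ 2 * τsq
      = (∑ j ∈ Icc 2 (J - 1),
          v j ^ 2 * (τsq * ((J : ℝ) - 1) / (((J : ℝ) - (j : ℝ)) * ((j : ℝ) - 1))))
        + 2 * ∑ j ∈ Icc 2 (J - 2), ∑ k ∈ Icc (j + 1) (J - 1),
            v j * v k * (τsq * ((J : ℝ) - 1) / (((J : ℝ) - (j : ℝ)) * ((k : ℝ) - 1))) := by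
    have e : ∀ i ∈ Icc 1 (J - 1), w i ^ 2 * τsq
        = ∑ j ∈ Icc 2 (J - 1), ∑ k ∈ Icc 2 (J - 1),
            ((v j * cc i j) * (v k * cc i k)) * τsq := by
      intro i _
      simp only [hw]
      rw [pow_two, Finset.sum_mul_sum, Finset.sum_mul]
      exact Finset.sum_congr rfl fun j _ => by rw [Finset.sum_mul]
    rw [Finset.sum_congr rfl e]
    rw [Finset.sum_comm (s := Icc 1 (J - 1)) (t := Icc 2 (J - 1))]
    have e2 : ∀ j ∈ Icc 2 (J - 1),
        ∑ i ∈ Icc 1 (J - 1), ∑ k ∈ Icc 2 (J - 1), ((v j * cc i j) * (v k * cc i k)) * τsq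
          = ∑ k ∈ Icc 2 (J - 1),
              (v j * v k * τsq) * ∑ i ∈ Icc 1 (J - 1), cc i j * cc i k := by
      intro j _
      rw [Finset.sum_comm (s := Icc 1 (J - 1)) (t := Icc 2 (J - 1))]
      refine Finset.sum_congr rfl fun k _ => ?_
      rw [Finset.mul_sum]
      exact Finset.sum_congr rfl fun i _ => by ring
    rw [Finset.sum_congr rfl e2]
    -- split the inner sum into below-diagonal, diagonal, above-diagonal
    have e3 : ∀ j ∈ Icc 2 (J - 1),
        ∑ k ∈ Icc 2 (J - 1), (v j * v k * τsq) * ∑ i ∈ Icc 1 (J - 1), cc i j * cc i k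
          = (∑ k ∈ Icc 2 (j - 1),
              (v j * v k * τsq) * ∑ i ∈ Icc 1 (J - 1), cc i j * cc i k)
            + (v j * v j * τsq) * (∑ i ∈ Icc 1 (J - 1), cc i j * cc i j)
            + ∑ k ∈ Icc (j + 1) (J - 1),
                (v j * v k * τsq) * ∑ i ∈ Icc 1 (J - 1), cc i j * cc i k := by
      intro j hj
      rw [mem_Icc] at hj
      exact sum_Icc_three' (fun k => (v j * v k * τsq) * ∑ i ∈ Icc 1 (J - 1), cc i j * cc i k)
        hj.1 hj.2 (by omega)
    rw [Finset.sum_congr rfl e3, Finset.sum_add_distrib, Finset.sum_add_distrib]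
    -- lower triangle equals upper triangle
    have tri : ∑ j ∈ Icc 2 (J - 1), ∑ k ∈ Icc 2 (j - 1),
          (v j * v k * τsq) * ∑ i ∈ Icc 1 (J - 1), cc i j * cc i k
        = ∑ j ∈ Icc 2 (J - 1), ∑ k ∈ Icc (j + 1) (J - 1),
            (v j * v k * τsq) * ∑ i ∈ Icc 1 (J - 1), cc i j * cc i k := by
      rw [Finset.sum_comm' (t' := Icc 2 (J - 1)) (s' := fun y => Icc (y + 1) (J - 1))
        (by intro x y; simp only [mem_Icc]; omega)]
      refine Finset.sum_congr rfl fun j hj => Finset.sum_congr rfl fun k hk => ?_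
      have : ∑ i ∈ Icc 1 (J - 1), cc i k * cc i j = ∑ i ∈ Icc 1 (J - 1), cc i j * cc i k :=
        Finset.sum_congr rfl fun i _ => mul_comm _ _
      rw [this]; ring
    rw [tri]
    -- evaluate via hG
    have ediag : ∀ j ∈ Icc 2 (J - 1),
        (v j * v j * τsq) * (∑ i ∈ Icc 1 (J - 1), cc i j * cc i j)
          = v j ^ 2 * (τsq * ((J : ℝ) - 1) / (((J : ℝ) - (j : ℝ)) * ((j : ℝ) - 1))) := by
      intro j hj
      rw [mem_Icc] at hj
      rw [hG j j hj.1 le_rfl hj.2]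
      ring
    have eoff : ∀ j ∈ Icc 2 (J - 1),
        ∑ k ∈ Icc (j + 1) (J - 1),
            (v j * v k * τsq) * ∑ i ∈ Icc 1 (J - 1), cc i j * cc i k
          = ∑ k ∈ Icc (j + 1) (J - 1),
              v j * v k * (τsq * ((J : ℝ) - 1) / (((J : ℝ) - (j : ℝ)) * ((k : ℝ) - 1))) := by
      intro j hj
      rw [mem_Icc] at hj
      refine Finset.sum_congr rfl fun k hk => ?_
      rw [mem_Icc] at hk
      rw [hG j k hj.1 (by omega) hk.2]
      ring
    rw [Finset.sum_congr rfl ediag, Finset.sum_congr rfl eoff]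
    -- shrink the outer range of the off-diagonal sum
    have shrink : ∑ j ∈ Icc 2 (J - 1), ∑ k ∈ Icc (j + 1) (J - 1),
          v j * v k * (τsq * ((J : ℝ) - 1) / (((J : ℝ) - (j : ℝ)) * ((k : ℝ) - 1)))
        = ∑ j ∈ Icc 2 (J - 2), ∑ k ∈ Icc (j + 1) (J - 1),
            v j * v k * (τsq * ((J : ℝ) - 1) / (((J : ℝ) - (j : ℝ)) * ((k : ℝ) - 1))) := by
      rw [sum_Icc_cut' (fun j => ∑ k ∈ Icc (j + 1) (J - 1),
          v j * v k * (τsq * ((J : ℝ) - 1) / (((J : ℝ) - (j : ℝ)) * ((k : ℝ) - 1))))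
        (by omega : 2 ≤ J - 1) (by omega) (by omega : J - 1 ≤ J - 1 + 1)]
      rw [show J - 1 - 1 = J - 2 from by omega]
      have : Icc (J - 1 + 1) (J - 1) = (∅ : Finset ℕ) := Finset.Icc_eq_empty (by omega)
      rw [Finset.Icc_self, Finset.sum_singleton, this, Finset.sum_empty]
      simp
    rw [shrink]
    ring
  rw [Finset.sum_congr rfl Hε, Hα]
  have hcomb : (∑ j ∈ Icc 2 (J - 1),
        v j ^ 2 * (τsq * ((J : ℝ) - 1) / (((J : ℝ) - (j : ℝ)) * ((j : ℝ) - 1))))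
      + ∑ j ∈ Icc 2 (J - 1),
          (v j ^ 2 * ((∑ i ∈ Icc 1 (j - 1), σsq i j) / ((j : ℝ) - 1) ^ 2)
            + v j ^ 2 * ((∑ i ∈ Icc j (J - 1), σsq i j) / ((J : ℝ) - (j : ℝ)) ^ 2))
      = ∑ j ∈ Icc 2 (J - 1), (v j) ^ 2 *
          (τsq * ((J : ℝ) - 1) / (((J : ℝ) - (j : ℝ)) * ((j : ℝ) - 1))
        + (∑ i ∈ Icc 1 (j - 1), σsq i j) / ((j : ℝ) - 1) ^ 2
        + (∑ i ∈ Icc j (J - 1), σsq i j) / ((J : ℝ) - (j : ℝ)) ^ 2) := by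
    rw [← Finset.sum_add_distrib]
    exact Finset.sum_congr rfl fun j _ => by ring
  linarith [hcomb]
end

section
/- In Setting (B): (i) for every j with 2 ≤ j ≤ J−2, Cov(B_j, B_{j+1}) = (1/(J−j))·[σ²_{j,j} − (1/(J−j−1))·Σ_{ℓ=j+1}^{J−1} σ²_{ℓ,j}]; and (ii) for all j, k with 2 ≤ j ≤ J−1, 2 ≤ k ≤ J−1 and k > j+1, Cov(B_j, B_k) = 0. -/
open MeasureTheory ProbabilityTheory Finset

noncomputable def clusterWeight (J j l : ℕ) : ℝ :=
  (if l = j - 1 then 1 else 0) - if j ≤ l then ((J : ℝ) - j)⁻¹ else 0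

def periodWeight (j m : ℕ) : ℝ :=
  (if m = j then 1 else 0) - if m = j - 1 then 1 else 0

noncomputable def noiseCoef (J j : ℕ) (p : ℕ × ℕ) : ℝ :=
  clusterWeight J j p.1 * periodWeight j p.2

section Weights

variable {J j : ℕ}

theorem sum_clusterWeight_mul (hj : 2 ≤ j) (hjJ : j ≤ J) (g : ℕ → ℝ) :
    ∑ l ∈ Icc 1 (J - 1), clusterWeight J j l * g l
      = g (j - 1) - ((J : ℝ) - j)⁻¹ * ∑ l ∈ Icc j (J - 1), g l := by
  have hfilter : (Icc 1 (J - 1)).filter (j ≤ ·) = Icc j (J - 1) := by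
    ext l; simp only [mem_filter, mem_Icc]; omega
  simp only [clusterWeight, sub_mul, ite_mul, one_mul, zero_mul, sum_sub_distrib,
    sum_ite_eq', ← sum_filter, hfilter, mul_sum]
  rw [if_pos (mem_Icc.2 ⟨by omega, by omega⟩)]

theorem sum_clusterWeight (hj : 2 ≤ j) (hjJ : j < J) :
    ∑ l ∈ Icc 1 (J - 1), clusterWeight J j l = 0 := by
  have hJj : (J : ℝ) - j ≠ 0 := sub_ne_zero.2 (by exact_mod_cast hjJ.ne')
  simpa [Nat.cast_sub (by omega : j ≤ J - 1 + 1), Nat.cast_sub (by omega : 1 ≤ J),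
    hJj, sub_add_cancel] using sum_clusterWeight_mul hj hjJ.le 1

theorem clusterWeight_pred_self (hj : 1 ≤ j) : clusterWeight J j (j - 1) = 1 := by
  simp [clusterWeight, show ¬ j ≤ j - 1 by omega]

theorem clusterWeight_mul_clusterWeight_succ (hj : 1 ≤ j) (l : ℕ) :
    clusterWeight J j l * clusterWeight J (j + 1) l
      = -((J : ℝ) - j)⁻¹ * clusterWeight J (j + 1) l := by
  simp only [clusterWeight, Nat.add_sub_cancel]
  split_ifs <;> first | omega | ring

theorem sum_periodWeight_mul (hj : 2 ≤ j) (hjJ : j ≤ J) (h : ℕ → ℝ) :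
    ∑ m ∈ Icc 1 J, periodWeight j m * h m = h j - h (j - 1) := by
  simp only [periodWeight, sub_mul, ite_mul, one_mul, zero_mul, sum_sub_distrib, sum_ite_eq']
  rw [if_pos (mem_Icc.2 ⟨by omega, hjJ⟩), if_pos (mem_Icc.2 ⟨by omega, by omega⟩)]

theorem periodWeight_mul_periodWeight_of_succ_lt {k : ℕ} (hjk : j + 1 < k) (m : ℕ) :
    periodWeight j m * periodWeight k m = 0 := by
  simp only [periodWeight]
  split_ifs <;> first | omega | ring

theorem sum_noiseCoef_mul (hj : 2 ≤ j) (hjJ : j ≤ J) (g : ℕ × ℕ → ℝ) :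
    ∑ p ∈ Icc 1 (J - 1) ×ˢ Icc 1 J, noiseCoef J j p * g p
      = ∑ l ∈ Icc 1 (J - 1), clusterWeight J j l * (g (l, j) - g (l, j - 1)) := by
  rw [sum_product]
  refine sum_congr rfl fun l _ ↦ ?_
  simp only [noiseCoef, mul_assoc, ← mul_sum, sum_periodWeight_mul hj hjJ]

theorem sum_noiseCoef_mul_noiseCoef_succ (hj : 2 ≤ j) (hjJ : j + 1 < J) (σsq : ℕ → ℕ → ℝ) :
    ∑ p ∈ Icc 1 (J - 1) ×ˢ Icc 1 J, noiseCoef J j p * noiseCoef J (j + 1) p * σsq p.1 p.2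
      = ((J : ℝ) - j)⁻¹ *
          (σsq j j - ((J : ℝ) - j - 1)⁻¹ * ∑ l ∈ Icc (j + 1) (J - 1), σsq l j) := by
  have hj1 : 1 ≤ j := by omega
  have hsucc : periodWeight (j + 1) j = -1 := by simp [periodWeight]
  have hpred : periodWeight (j + 1) (j - 1) = 0 := by
    simp [periodWeight, show j - 1 ≠ j + 1 by omega, show j - 1 ≠ j by omega]
  have hterm (l : ℕ) : clusterWeight J j l * (noiseCoef J (j + 1) (l, j) * σsq l j
        - noiseCoef J (j + 1) (l, j - 1) * σsq l (j - 1))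
      = ((J : ℝ) - j)⁻¹ * (clusterWeight J (j + 1) l * σsq l j) := by
    simp only [noiseCoef, hsucc, hpred]
    linear_combination (-σsq l j) * clusterWeight_mul_clusterWeight_succ (J := J) (j := j) hj1 l
  simp only [mul_assoc, sum_noiseCoef_mul hj (by omega : j ≤ J), hterm, ← mul_sum,
    sum_clusterWeight_mul (by omega : 2 ≤ j + 1) (by omega : j + 1 ≤ J), Nat.add_sub_cancel]
  push_cast
  ring

theorem sum_noiseCoef_mul_noiseCoef_of_succ_lt {k : ℕ} (hjk : j + 1 < k) (σsq : ℕ → ℕ → ℝ) :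
    ∑ p ∈ Icc 1 (J - 1) ×ˢ Icc 1 J, noiseCoef J j p * noiseCoef J k p * σsq p.1 p.2 = 0 := by
  refine sum_eq_zero fun p _ ↦ ?_
  rw [noiseCoef, noiseCoef, mul_mul_mul_comm, periodWeight_mul_periodWeight_of_succ_lt hjk,
    mul_zero, zero_mul]

end Weights

theorem covariance_const_add_sum_mul_of_indepFun {Ω ι : Type*} {mΩ : MeasurableSpace Ω}
    {μ : Measure Ω} [IsProbabilityMeasure μ] {s : Finset ι} {X : ι → Ω → ℝ}
    (hX : ∀ i ∈ s, MemLp (X i) 2 μ) (hindep : ∀ i ∈ s, ∀ k ∈ s, i ≠ k → X i ⟂ᵢ[μ] X k)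
    (C D : ℝ) (c d : ι → ℝ) :
    cov[fun ω ↦ C + ∑ i ∈ s, c i * X i ω, fun ω ↦ D + ∑ i ∈ s, d i * X i ω; μ]
      = ∑ i ∈ s, c i * d i * Var[X i; μ] := by
  have hcX (c : ι → ℝ) : ∀ i ∈ s, MemLp (fun ω ↦ c i * X i ω) 2 μ :=
    fun i hi ↦ (hX i hi).const_mul (c i)
  have hint (c : ι → ℝ) : Integrable (fun ω ↦ ∑ i ∈ s, c i * X i ω) μ :=
    (memLp_finsetSum s (hcX c)).integrable one_le_two
  rw [covariance_const_add_left (hint c), covariance_const_add_right (hint d),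
    covariance_fun_sum_fun_sum' (hcX c) (hcX d)]
  refine sum_congr rfl fun i hi ↦ ?_
  rw [sum_eq_single i (fun k hk hki ↦ ?_) (absurd hi), covariance_const_mul_left,
    covariance_const_mul_right, covariance_self (hX i hi).aemeasurable]
  · ring
  rw [covariance_const_mul_left, covariance_const_mul_right,
    (hindep i hi k hk hki.symm).covariance_eq_zero (hX i hi) (hX k hk), mul_zero, mul_zero]

theorem ProbabilityTheory.iIndepFun.indepFun_of_subtype {Ω ι β : Type*}
    {mΩ : MeasurableSpace Ω} {μ : Measure Ω} [MeasurableSpace β] {P : ι → Prop} {f : ι → Ω → β}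
    (h : iIndepFun (fun x : Subtype P ↦ f x.1) μ) {a b : ι} (ha : P a) (hb : P b)
    (hab : a ≠ b) : f a ⟂ᵢ[μ] f b :=
  h.indepFun (i := ⟨a, ha⟩) (j := ⟨b, hb⟩) (Subtype.coe_ne_coe.1 hab)

theorem crossover_eq_const_add_sum_noiseCoef_mul {Ω : Type*} {J j : ℕ} (hj : 2 ≤ j)
    (hjJ : j < J) {μc β : ℝ} {θ : ℕ → ℝ} {α : ℕ → Ω → ℝ} {ε Y : ℕ → ℕ → Ω → ℝ}
    (hY : ∀ i j ω, Y i j ω = μc + α i ω + θ j + (if i < j then β else 0) + ε i j ω)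
    {B : Ω → ℝ} (hB : ∀ ω, B ω = Y (j - 1) j ω - Y (j - 1) (j - 1) ω
        - ((J : ℝ) - (j : ℝ))⁻¹ * ∑ l ∈ Icc j (J - 1), (Y l j ω - Y l (j - 1) ω)) :
    B = fun ω ↦ β + ∑ p ∈ Icc 1 (J - 1) ×ˢ Icc 1 J, noiseCoef J j p * ε p.1 p.2 ω := by
  funext ω
  have hdiff (l : ℕ) : Y l j ω - Y l (j - 1) ω
      = (θ j - θ (j - 1)) + (if l = j - 1 then β else 0) + (ε l j ω - ε l (j - 1) ω) := by
    rw [hY, hY]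
    split_ifs <;> first | omega | ring
  rw [hB, ← sum_clusterWeight_mul hj hjJ.le (fun l ↦ Y l j ω - Y l (j - 1) ω),
    sum_noiseCoef_mul hj hjJ.le]
  simp only [hdiff, mul_add, sum_add_distrib, ← sum_mul, sum_clusterWeight hj hjJ, zero_mul,
    zero_add, mul_ite, mul_zero, sum_ite_eq',
    if_pos (mem_Icc.2 ⟨by omega, by omega⟩ : j - 1 ∈ Icc 1 (J - 1)),
    clusterWeight_pred_self (by omega : 1 ≤ j), one_mul]

theorem stmt_11_general
    {Ω : Type*} [MeasureSpace Ω] [IsProbabilityMeasure (ℙ : Measure Ω)]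
    (J : ℕ)
    (μc β : ℝ) (θ : ℕ → ℝ) (σsq : ℕ → ℕ → ℝ)
    (α : ℕ → Ω → ℝ) (ε : ℕ → ℕ → Ω → ℝ)
    -- the random variables {α_i} ∪ {ε_{i,j}} are mutually independent
    (hindep : iIndepFun
      (fun x : {x : ℕ ⊕ ℕ × ℕ // (∀ i, x = Sum.inl i → i ∈ Icc 1 (J - 1)) ∧
          (∀ i j, x = Sum.inr (i, j) → i ∈ Icc 1 (J - 1) ∧ j ∈ Icc 1 J)} =>
        Sum.elim α (fun q => ε q.1 q.2) x.1) ℙ)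
    -- moment assumptions
    (hVε : ∀ i ∈ Icc 1 (J - 1), ∀ j ∈ Icc 1 J, variance (ε i j) ℙ = σsq i j)
    (hL2ε : ∀ i ∈ Icc 1 (J - 1), ∀ j ∈ Icc 1 J, MemLp (ε i j) 2 ℙ)
    -- the mixed effects model: cluster i is on intervention in periods j > i
    (Y : ℕ → ℕ → Ω → ℝ)
    (hY : ∀ i j ω, Y i j ω = μc + α i ω + θ j + (if i < j then β else 0) + ε i j ω)
    -- the crossover contrast B_j
    (B : ℕ → Ω → ℝ)
    (hB : ∀ j ω, B j ω = Y (j - 1) j ω - Y (j - 1) (j - 1) ω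
        - ((J : ℝ) - (j : ℝ))⁻¹ * ∑ l ∈ Icc j (J - 1), (Y l j ω - Y l (j - 1) ω))
    :
    (∀ j ∈ Icc 2 (J - 2),
        covar (B j) (B (j + 1))
          = ((J : ℝ) - (j : ℝ))⁻¹ *
              (σsq j j - ((J : ℝ) - (j : ℝ) - 1)⁻¹ * ∑ l ∈ Icc (j + 1) (J - 1), σsq l j))
      ∧ (∀ j ∈ Icc 2 (J - 1), ∀ k ∈ Icc 2 (J - 1), j + 1 < k →
          covar (B j) (B k) = 0) := by
  have hnoise {p : ℕ × ℕ} (hp : p ∈ Icc 1 (J - 1) ×ˢ Icc 1 J) :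
      (∀ i, (Sum.inr p : ℕ ⊕ ℕ × ℕ) = Sum.inl i → i ∈ Icc 1 (J - 1)) ∧
        (∀ i j, (Sum.inr p : ℕ ⊕ ℕ × ℕ) = Sum.inr (i, j) →
          i ∈ Icc 1 (J - 1) ∧ j ∈ Icc 1 J) :=
    ⟨by simp, fun i j h ↦ by cases Sum.inr_injective h; exact mem_product.1 hp⟩
  have hcov {j k : ℕ} (hj : j ∈ Icc 2 (J - 1)) (hk : k ∈ Icc 2 (J - 1)) :
      covar (B j) (B k) = ∑ p ∈ Icc 1 (J - 1) ×ˢ Icc 1 J,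
        noiseCoef J j p * noiseCoef J k p * σsq p.1 p.2 := by
    rw [mem_Icc] at hj hk
    rw [show covar (B j) (B k) = cov[B j, B k] from rfl,
      crossover_eq_const_add_sum_noiseCoef_mul hj.1 (by omega) hY (hB j),
      crossover_eq_const_add_sum_noiseCoef_mul hk.1 (by omega) hY (hB k),
      covariance_const_add_sum_mul_of_indepFun (X := fun p : ℕ × ℕ ↦ ε p.1 p.2)
        (fun p hp ↦ hL2ε _ (mem_product.1 hp).1 _ (mem_product.1 hp).2)
        (fun p hp q hq hpq ↦
          hindep.indepFun_of_subtype (f := Sum.elim α fun r : ℕ × ℕ ↦ ε r.1 r.2)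
          (hnoise hp) (hnoise hq) (Sum.inr_injective.ne hpq))]
    exact sum_congr rfl fun p hp ↦ by rw [hVε _ (mem_product.1 hp).1 _ (mem_product.1 hp).2]
  refine ⟨fun j hj ↦ ?_, fun j hj k hk hjk ↦ ?_⟩
  · have hj' := mem_Icc.1 hj
    rw [hcov (mem_Icc.2 ⟨hj'.1, by omega⟩) (mem_Icc.2 ⟨by omega, by omega⟩),
      sum_noiseCoef_mul_noiseCoef_succ hj'.1 (by omega)]
  · rw [hcov hj hk, sum_noiseCoef_mul_noiseCoef_of_succ_lt hjk]

/-- **Covariances of the crossover contrasts `B_j`, `B_k` in Setting (B):**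
adjacent periods have the displayed covariance, and non-adjacent periods are uncorrelated. -/
theorem stmt_11
    {Ω : Type*} [MeasureSpace Ω] [IsProbabilityMeasure (ℙ : Measure Ω)]
    (J : ℕ) (hJ : 3 ≤ J)
    (μc β τsq : ℝ) (θ : ℕ → ℝ) (σsq : ℕ → ℕ → ℝ)
    (α : ℕ → Ω → ℝ) (ε : ℕ → ℕ → Ω → ℝ)
    (hmα : ∀ i, Measurable (α i)) (hmε : ∀ i j, Measurable (ε i j))
    -- the random variables {α_i} ∪ {ε_{i,j}} are mutually independent
    (hindep : iIndepFun
      (fun x : {x : ℕ ⊕ ℕ × ℕ // (∀ i, x = Sum.inl i → i ∈ Icc 1 (J - 1)) ∧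
          (∀ i j, x = Sum.inr (i, j) → i ∈ Icc 1 (J - 1) ∧ j ∈ Icc 1 J)} =>
        Sum.elim α (fun q => ε q.1 q.2) x.1) ℙ)
    -- moment assumptions
    (hEα : ∀ i ∈ Icc 1 (J - 1), ∫ ω, α i ω ∂ℙ = 0)
    (hVα : ∀ i ∈ Icc 1 (J - 1), variance (α i) ℙ = τsq)
    (hL2α : ∀ i ∈ Icc 1 (J - 1), MemLp (α i) 2 ℙ)
    (hEε : ∀ i ∈ Icc 1 (J - 1), ∀ j ∈ Icc 1 J, ∫ ω, ε i j ω ∂ℙ = 0)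
    (hVε : ∀ i ∈ Icc 1 (J - 1), ∀ j ∈ Icc 1 J, variance (ε i j) ℙ = σsq i j)
    (hL2ε : ∀ i ∈ Icc 1 (J - 1), ∀ j ∈ Icc 1 J, MemLp (ε i j) 2 ℙ)
    -- the mixed effects model: cluster i is on intervention in periods j > i
    (Y : ℕ → ℕ → Ω → ℝ)
    (hY : ∀ i j ω, Y i j ω = μc + α i ω + θ j + (if i < j then β else 0) + ε i j ω)
    -- the crossover contrast B_j
    (B : ℕ → Ω → ℝ)
    (hB : ∀ j ω, B j ω = Y (j - 1) j ω - Y (j - 1) (j - 1) ω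
        - ((J : ℝ) - (j : ℝ))⁻¹ * ∑ l ∈ Icc j (J - 1), (Y l j ω - Y l (j - 1) ω))
    :
    (∀ j ∈ Icc 2 (J - 2),
        covar (B j) (B (j + 1))
          = ((J : ℝ) - (j : ℝ))⁻¹ *
              (σsq j j - ((J : ℝ) - (j : ℝ) - 1)⁻¹ * ∑ l ∈ Icc (j + 1) (J - 1), σsq l j))
      ∧ (∀ j ∈ Icc 2 (J - 1), ∀ k ∈ Icc 2 (J - 1), j + 1 < k →
          covar (B j) (B k) = 0) :=
  stmt_11_general J μc β θ σsq α ε hindep hVε hL2ε Y hY B hB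
end

section
/- In Setting (B), for any deterministic constants w_2,...,w_{J−1}, the crossover estimator β̂^CO = Σ_{j=2}^{J−1} w_j·B_j satisfies Var(β̂^CO) = Σ_{j=2}^{J−1} w_j²·[σ²_{j−1,j} + σ²_{j−1,j−1} + (1/(J−j)²)·Σ_{ℓ=j}^{J−1} (σ²_{ℓ,j} + σ²_{ℓ,j−1})] + 2·Σ_{j=2}^{J−2} w_j·w_{j+1}·(1/(J−j))·[σ²_{j,j} − (1/(J−j−1))·Σ_{ℓ=j+1}^{J−1} σ²_{ℓ,j}]. In particular, Var(β̂^CO) does not depend on τ². -/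
open MeasureTheory ProbabilityTheory Finset

section Aux
variable {Ω : Type*} [MeasureSpace Ω] [IsProbabilityMeasure (ℙ : Measure Ω)]

lemma var_const_add (c : ℝ) (X : Ω → ℝ) (hX : MemLp X 2 ℙ) :
    variance (fun ω => c + X ω) ℙ = variance X ℙ := by
  have h1 : MemLp (fun ω => c + X ω) 2 ℙ := (memLp_const c).add hX
  rw [variance_eq_integral h1.aemeasurable, variance_eq_integral hX.aemeasurable]
  have hint : ∫ x, (c + X x) ∂ℙ = c + ∫ x, X x ∂ℙ := by
    rw [integral_add (integrable_const c) (hX.integrable one_le_two)]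
    simp
  congr 1
  funext ω
  simp only [Pi.pow_apply, Pi.sub_apply, hint]
  ring

end Aux

noncomputable def gco (J j ℓ : ℕ) : ℝ :=
  (if ℓ = j - 1 then 1 else 0) - ((J : ℝ) - (j : ℝ))⁻¹ * (if ℓ ∈ Icc j (J - 1) then 1 else 0)

noncomputable def uco (J : ℕ) (w : ℕ → ℝ) (k : ℕ) : ℝ := if k ∈ Icc 2 (J - 1) then w k else 0
noncomputable def vco (J : ℕ) (w : ℕ → ℝ) (k : ℕ) : ℝ := if k ∈ Icc 1 (J - 2) then w (k + 1) else 0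

noncomputable def aco (J : ℕ) (w : ℕ → ℝ) (ℓ k : ℕ) : ℝ :=
  uco J w k * gco J k ℓ - vco J w k * gco J (k + 1) ℓ

noncomputable def Xco {Ω : Type*} (J : ℕ) (w : ℕ → ℝ) (ε : ℕ → ℕ → Ω → ℝ) (p : ℕ × ℕ) :
    Ω → ℝ := fun ω => aco J w p.2 p.1 * ε p.2 p.1 ω

lemma sum_helper (A B : Finset ℕ) (hB : B ⊆ A) (a : ℕ) (ha : a ∈ A) (c1 c2 : ℝ) (F : ℕ → ℝ) :
    ∑ ℓ ∈ A, (c1 * (if ℓ = a then (1:ℝ) else 0) + c2 * (if ℓ ∈ B then (1:ℝ) else 0)) * F ℓ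
      = c1 * F a + c2 * ∑ ℓ ∈ B, F ℓ := by
  simp only [add_mul, Finset.sum_add_distrib]
  congr 1
  · simp only [mul_ite, ite_mul, mul_one, mul_zero, zero_mul, one_mul]
    rw [Finset.sum_ite_eq' A a (fun ℓ => c1 * F ℓ), if_pos ha]
  · simp only [mul_ite, ite_mul, mul_one, mul_zero, zero_mul, one_mul]
    rw [Finset.sum_ite_mem A B (fun ℓ => c2 * F ℓ), Finset.inter_eq_right.mpr hB, Finset.mul_sum]

lemma sum_g {J j : ℕ} (hJ : 3 ≤ J) (hj : j ∈ Icc 2 (J - 1)) (F : ℕ → ℝ) :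
    ∑ ℓ ∈ Icc 1 (J - 1), gco J j ℓ * F ℓ
      = F (j - 1) - ((J : ℝ) - (j : ℝ))⁻¹ * ∑ ℓ ∈ Icc j (J - 1), F ℓ := by
  simp only [mem_Icc] at hj
  calc ∑ ℓ ∈ Icc 1 (J - 1), gco J j ℓ * F ℓ
      = ∑ ℓ ∈ Icc 1 (J - 1),
          ((1 : ℝ) * (if ℓ = j - 1 then (1:ℝ) else 0)
            + (-(((J : ℝ) - (j : ℝ))⁻¹)) * (if ℓ ∈ Icc j (J - 1) then (1:ℝ) else 0)) * F ℓ :=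
        Finset.sum_congr rfl (fun ℓ _ => by unfold gco; ring)
    _ = 1 * F (j - 1) + (-(((J : ℝ) - (j : ℝ))⁻¹)) * ∑ ℓ ∈ Icc j (J - 1), F ℓ :=
        sum_helper _ _ (Icc_subset_Icc (by omega) le_rfl) _ (by simp only [mem_Icc]; omega) _ _ F
    _ = F (j - 1) - ((J : ℝ) - (j : ℝ))⁻¹ * ∑ ℓ ∈ Icc j (J - 1), F ℓ := by ring

lemma sum_gsq {J j : ℕ} (hJ : 3 ≤ J) (hj : j ∈ Icc 2 (J - 1)) (F : ℕ → ℝ) :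
    ∑ ℓ ∈ Icc 1 (J - 1), (gco J j ℓ) ^ 2 * F ℓ
      = F (j - 1) + (((J : ℝ) - (j : ℝ)) ^ 2)⁻¹ * ∑ ℓ ∈ Icc j (J - 1), F ℓ := by
  simp only [mem_Icc] at hj
  calc ∑ ℓ ∈ Icc 1 (J - 1), (gco J j ℓ) ^ 2 * F ℓ
      = ∑ ℓ ∈ Icc 1 (J - 1),
          ((1 : ℝ) * (if ℓ = j - 1 then (1:ℝ) else 0)
            + ((((J : ℝ) - (j : ℝ))⁻¹) ^ 2) * (if ℓ ∈ Icc j (J - 1) then (1:ℝ) else 0)) * F ℓ := by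
        refine Finset.sum_congr rfl (fun ℓ _ => ?_)
        congr 1
        unfold gco
        simp only [mem_Icc]
        split_ifs <;> first | ring1 | (exfalso; omega)
    _ = 1 * F (j - 1) + ((((J : ℝ) - (j : ℝ))⁻¹) ^ 2) * ∑ ℓ ∈ Icc j (J - 1), F ℓ :=
        sum_helper _ _ (Icc_subset_Icc (by omega) le_rfl) _ (by simp only [mem_Icc]; omega) _ _ F
    _ = F (j - 1) + (((J : ℝ) - (j : ℝ)) ^ 2)⁻¹ * ∑ ℓ ∈ Icc j (J - 1), F ℓ := by
        rw [inv_pow]; ring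

lemma sum_gg {J k : ℕ} (hJ : 3 ≤ J) (hk : k ∈ Icc 2 (J - 2)) (F : ℕ → ℝ) :
    ∑ ℓ ∈ Icc 1 (J - 1), (gco J k ℓ * gco J (k + 1) ℓ) * F ℓ
      = -(((J : ℝ) - (k : ℝ))⁻¹) * F k
        + (((J : ℝ) - (k : ℝ))⁻¹ * ((J : ℝ) - (k : ℝ) - 1)⁻¹) * ∑ ℓ ∈ Icc (k+1) (J - 1), F ℓ := by
  simp only [mem_Icc] at hk
  have hc : ((J : ℝ) - ((k + 1 : ℕ) : ℝ)) = (J : ℝ) - (k : ℝ) - 1 := by push_cast; ring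
  calc ∑ ℓ ∈ Icc 1 (J - 1), (gco J k ℓ * gco J (k + 1) ℓ) * F ℓ
      = ∑ ℓ ∈ Icc 1 (J - 1),
          ((-(((J : ℝ) - (k : ℝ))⁻¹)) * (if ℓ = k then (1:ℝ) else 0)
            + (((J : ℝ) - (k : ℝ))⁻¹ * ((J : ℝ) - (k : ℝ) - 1)⁻¹)
              * (if ℓ ∈ Icc (k+1) (J - 1) then (1:ℝ) else 0)) * F ℓ := by
        refine Finset.sum_congr rfl (fun ℓ _ => ?_)
        congr 1
        unfold gco
        rw [hc]
        simp only [Nat.add_sub_cancel, mem_Icc]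
        split_ifs <;> first | ring1 | (exfalso; omega)
    _ = -(((J : ℝ) - (k : ℝ))⁻¹) * F k
        + (((J : ℝ) - (k : ℝ))⁻¹ * ((J : ℝ) - (k : ℝ) - 1)⁻¹) * ∑ ℓ ∈ Icc (k+1) (J - 1), F ℓ :=
        sum_helper _ _ (Icc_subset_Icc (by omega) le_rfl) _ (by simp only [mem_Icc]; omega) _ _ F

lemma reindex_sum {J : ℕ} (hJ : 3 ≤ J) (F : ℕ → ℝ) :
    ∑ k ∈ Icc 1 (J - 2), F (k + 1) = ∑ j ∈ Icc 2 (J - 1), F j := by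
  have h : Icc 2 (J-1) = (Icc 1 (J-2)).map (addRightEmbedding 1) := by
    rw [Finset.map_add_right_Icc]
    congr 1 <;> omega
  rw [h, Finset.sum_map]
  rfl

/-- **Variance of the crossover estimator in Setting (B).**
In particular, the right-hand side does not depend on `τ²`. -/
theorem stmt_12
    {Ω : Type*} [MeasureSpace Ω] [IsProbabilityMeasure (ℙ : Measure Ω)]
    (J : ℕ) (hJ : 3 ≤ J)
    (μc β τsq : ℝ) (θ : ℕ → ℝ) (σsq : ℕ → ℕ → ℝ)
    (α : ℕ → Ω → ℝ) (ε : ℕ → ℕ → Ω → ℝ)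
    (hmα : ∀ i, Measurable (α i)) (hmε : ∀ i j, Measurable (ε i j))
    -- the random variables {α_i} ∪ {ε_{i,j}} are mutually independent
    (hindep : iIndepFun
      (fun x : {x : ℕ ⊕ ℕ × ℕ // (∀ i, x = Sum.inl i → i ∈ Icc 1 (J - 1)) ∧
          (∀ i j, x = Sum.inr (i, j) → i ∈ Icc 1 (J - 1) ∧ j ∈ Icc 1 J)} =>
        Sum.elim α (fun q => ε q.1 q.2) x.1) ℙ)
    -- moment assumptions
    (hEα : ∀ i ∈ Icc 1 (J - 1), ∫ ω, α i ω ∂ℙ = 0)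
    (hVα : ∀ i ∈ Icc 1 (J - 1), variance (α i) ℙ = τsq)
    (hL2α : ∀ i ∈ Icc 1 (J - 1), MemLp (α i) 2 ℙ)
    (hEε : ∀ i ∈ Icc 1 (J - 1), ∀ j ∈ Icc 1 J, ∫ ω, ε i j ω ∂ℙ = 0)
    (hVε : ∀ i ∈ Icc 1 (J - 1), ∀ j ∈ Icc 1 J, variance (ε i j) ℙ = σsq i j)
    (hL2ε : ∀ i ∈ Icc 1 (J - 1), ∀ j ∈ Icc 1 J, MemLp (ε i j) 2 ℙ)
    -- the mixed effects model: cluster i is on intervention in periods j > i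
    (Y : ℕ → ℕ → Ω → ℝ)
    (hY : ∀ i j ω, Y i j ω = μc + α i ω + θ j + (if i < j then β else 0) + ε i j ω)
    -- the crossover contrast B_j
    (B : ℕ → Ω → ℝ)
    (hB : ∀ j ω, B j ω = Y (j - 1) j ω - Y (j - 1) (j - 1) ω
        - ((J : ℝ) - (j : ℝ))⁻¹ * ∑ l ∈ Icc j (J - 1), (Y l j ω - Y l (j - 1) ω))
    -- the crossover estimator with deterministic weights w
    (w : ℕ → ℝ) (βCO : Ω → ℝ)
    (hCO : ∀ ω, βCO ω = ∑ j ∈ Icc 2 (J - 1), w j * B j ω)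
    :
    variance βCO ℙ
      = ∑ j ∈ Icc 2 (J - 1), (w j) ^ 2 *
          (σsq (j - 1) j + σsq (j - 1) (j - 1)
            + (((J : ℝ) - (j : ℝ)) ^ 2)⁻¹ * ∑ l ∈ Icc j (J - 1), (σsq l j + σsq l (j - 1)))
        + 2 * ∑ j ∈ Icc 2 (J - 2), w j * w (j + 1) * ((J : ℝ) - (j : ℝ))⁻¹ *
            (σsq j j - ((J : ℝ) - (j : ℝ) - 1)⁻¹ * ∑ l ∈ Icc (j + 1) (J - 1), σsq l j) := by
  classical
  have hJ3 : 3 ≤ J := hJ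
  -- Step 1: representation of B j
  have hBrep : ∀ j ∈ Icc 2 (J - 1), ∀ ω, B j ω
      = (θ j - θ (j - 1) + β
          - ((J : ℝ) - (j : ℝ))⁻¹ * ∑ l ∈ Icc j (J - 1), (θ j - θ (j - 1)))
        + ((∑ ℓ ∈ Icc 1 (J - 1), gco J j ℓ * ε ℓ j ω)
           - ∑ ℓ ∈ Icc 1 (J - 1), gco J j ℓ * ε ℓ (j - 1) ω) := by
    intro j hj ω
    have hj' := mem_Icc.mp hj
    rw [sum_g hJ3 hj (fun ℓ => ε ℓ j ω), sum_g hJ3 hj (fun ℓ => ε ℓ (j - 1) ω), hB]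
    have hsum : ∑ l ∈ Icc j (J - 1), (Y l j ω - Y l (j - 1) ω)
        = ∑ l ∈ Icc j (J - 1), ((θ j - θ (j - 1)) + (ε l j ω - ε l (j - 1) ω)) := by
      refine Finset.sum_congr rfl (fun l hl => ?_)
      have hl' := mem_Icc.mp hl
      rw [hY, hY, if_neg (by omega), if_neg (by omega)]
      ring
    rw [hsum, Finset.sum_add_distrib, hY (j-1) j ω, hY (j-1) (j-1) ω,
        if_pos (show j - 1 < j by omega), if_neg (show ¬ (j - 1 < j - 1) by omega)]
    simp only [Finset.sum_sub_distrib]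
    ring
  -- Step 2: the estimator as constant plus linear combination of the ε's
  have hT : ∀ ω, ∑ j ∈ Icc 2 (J - 1), w j *
        ((∑ ℓ ∈ Icc 1 (J - 1), gco J j ℓ * ε ℓ j ω)
          - ∑ ℓ ∈ Icc 1 (J - 1), gco J j ℓ * ε ℓ (j - 1) ω)
      = ∑ k ∈ Icc 1 (J - 1), ∑ ℓ ∈ Icc 1 (J - 1), aco J w ℓ k * ε ℓ k ω := by
    intro ω
    have hrhs : ∀ k ∈ Icc 1 (J - 1), ∑ ℓ ∈ Icc 1 (J - 1), aco J w ℓ k * ε ℓ k ω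
        = uco J w k * (∑ ℓ ∈ Icc 1 (J - 1), gco J k ℓ * ε ℓ k ω)
          - vco J w k * (∑ ℓ ∈ Icc 1 (J - 1), gco J (k+1) ℓ * ε ℓ k ω) := by
      intro k _
      rw [Finset.mul_sum, Finset.mul_sum, ← Finset.sum_sub_distrib]
      exact Finset.sum_congr rfl fun ℓ _ => by unfold aco; ring
    rw [Finset.sum_congr rfl hrhs, Finset.sum_sub_distrib]
    have h1 : ∑ k ∈ Icc 1 (J-1), uco J w k * (∑ ℓ ∈ Icc 1 (J - 1), gco J k ℓ * ε ℓ k ω)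
        = ∑ k ∈ Icc 2 (J-1), w k * (∑ ℓ ∈ Icc 1 (J - 1), gco J k ℓ * ε ℓ k ω) := by
      simp only [uco, ite_mul, zero_mul]
      rw [Finset.sum_ite_mem,
        Finset.inter_eq_right.mpr (Icc_subset_Icc (by omega) le_rfl)]
    have h2 : ∑ k ∈ Icc 1 (J-1), vco J w k * (∑ ℓ ∈ Icc 1 (J - 1), gco J (k+1) ℓ * ε ℓ k ω)
        = ∑ j ∈ Icc 2 (J-1), w j * (∑ ℓ ∈ Icc 1 (J - 1), gco J j ℓ * ε ℓ (j - 1) ω) := by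
      simp only [vco, ite_mul, zero_mul]
      rw [Finset.sum_ite_mem,
        Finset.inter_eq_right.mpr (Icc_subset_Icc le_rfl (by omega))]
      rw [← reindex_sum hJ3 (fun j => w j * (∑ ℓ ∈ Icc 1 (J - 1), gco J j ℓ * ε ℓ (j - 1) ω))]
      refine Finset.sum_congr rfl fun k _ => ?_
      simp only [Nat.add_sub_cancel]
    rw [h1, h2, ← Finset.sum_sub_distrib]
    exact Finset.sum_congr rfl fun j _ => by ring
  -- Step 3: variance of the linear combination
  set S : Finset (ℕ × ℕ) := (Icc 1 (J-1)) ×ˢ (Icc 1 (J-1)) with hS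
  have hXL2 : ∀ p ∈ S, MemLp (Xco J w ε p) 2 ℙ := by
    intro p hp
    rw [hS, Finset.mem_product] at hp
    have h1 := mem_Icc.mp hp.1
    exact (hL2ε p.2 hp.2 p.1 (mem_Icc.mpr ⟨h1.1, by omega⟩)).const_mul _
  have hswap : ∀ ω, ∑ k ∈ Icc 1 (J - 1), ∑ ℓ ∈ Icc 1 (J - 1), aco J w ℓ k * ε ℓ k ω
      = (∑ p ∈ S, Xco J w ε p) ω := by
    intro ω
    rw [Finset.sum_apply, hS, Finset.sum_product]
    rfl
  have hfun : βCO = fun ω =>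
      (∑ j ∈ Icc 2 (J - 1), w j * (θ j - θ (j - 1) + β
          - ((J : ℝ) - (j : ℝ))⁻¹ * ∑ l ∈ Icc j (J - 1), (θ j - θ (j - 1))))
        + (∑ p ∈ S, Xco J w ε p) ω := by
    funext ω
    rw [hCO ω, ← hswap ω, ← hT ω, ← Finset.sum_add_distrib]
    exact Finset.sum_congr rfl fun j hj => by rw [hBrep j hj ω]; ring
  have hpair : Set.Pairwise ↑S (fun p q : ℕ×ℕ =>
      IndepFun (Xco J w ε p) (Xco J w ε q) ℙ) := by
    intro p hp q hq hpq
    rw [Finset.mem_coe, hS, Finset.mem_product] at hp hq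
    have hp1 := mem_Icc.mp hp.1
    have hq1 := mem_Icc.mp hq.1
    let mk : ∀ (r : ℕ × ℕ), r.2 ∈ Icc 1 (J - 1) → r.1 ∈ Icc 1 J →
        {x : ℕ ⊕ ℕ × ℕ // (∀ i, x = Sum.inl i → i ∈ Icc 1 (J - 1)) ∧
          (∀ i j, x = Sum.inr (i, j) → i ∈ Icc 1 (J - 1) ∧ j ∈ Icc 1 J)} :=
      fun r h1 h2 => ⟨Sum.inr (r.2, r.1),
        ⟨fun i h => by simp at h,
         fun i j h => by
          rw [Sum.inr.injEq, Prod.mk.injEq] at h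
          exact ⟨h.1 ▸ h1, h.2 ▸ h2⟩⟩⟩
    have hpmem : p.1 ∈ Icc 1 J := mem_Icc.mpr ⟨hp1.1, by omega⟩
    have hqmem : q.1 ∈ Icc 1 J := mem_Icc.mpr ⟨hq1.1, by omega⟩
    have hne : mk p hp.2 hpmem ≠ mk q hq.2 hqmem := by
      intro hcontra
      apply hpq
      have hval := congrArg Subtype.val hcontra
      simp only [mk, Sum.inr.injEq, Prod.mk.injEq] at hval
      exact Prod.ext hval.2 hval.1
    have hind := hindep.indepFun hne
    exact hind.comp (measurable_const_mul (aco J w p.2 p.1))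
      (measurable_const_mul (aco J w q.2 q.1))
  have hvar : variance βCO ℙ = ∑ p ∈ S, (aco J w p.2 p.1) ^ 2 * σsq p.2 p.1 := by
    rw [hfun, var_const_add _ _ (memLp_finset_sum' S hXL2),
      IndepFun.variance_sum hXL2 hpair]
    refine Finset.sum_congr rfl fun p hp => ?_
    rw [hS, Finset.mem_product] at hp
    have h1 := mem_Icc.mp hp.1
    have : variance (Xco J w ε p) ℙ = (aco J w p.2 p.1) ^ 2 * variance (ε p.2 p.1) ℙ :=
      variance_const_mul _ _ _
    rw [this, hVε p.2 hp.2 p.1 (mem_Icc.mpr ⟨h1.1, by omega⟩)]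
  rw [hvar, hS, Finset.sum_product]
  -- Step 4: the algebraic identity
  have hinner : ∀ k ∈ Icc 1 (J - 1),
      ∑ ℓ ∈ Icc 1 (J - 1), (aco J w ℓ k) ^ 2 * σsq ℓ k
        = (if k ∈ Icc 2 (J-1) then w k ^ 2 * (σsq (k-1) k
              + (((J:ℝ) - (k:ℝ))^2)⁻¹ * ∑ ℓ ∈ Icc k (J-1), σsq ℓ k) else 0)
          + (if k ∈ Icc 1 (J-2) then w (k+1) ^ 2 * (σsq k k
              + (((J:ℝ) - (k:ℝ) - 1)^2)⁻¹ * ∑ ℓ ∈ Icc (k+1) (J-1), σsq ℓ k) else 0)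
          + (if k ∈ Icc 2 (J-2) then 2 * w k * w (k+1) * ((J:ℝ) - (k:ℝ))⁻¹ *
              (σsq k k - ((J:ℝ) - (k:ℝ) - 1)⁻¹ * ∑ ℓ ∈ Icc (k+1) (J-1), σsq ℓ k) else 0) := by
    intro k hk
    have hsplit : ∑ ℓ ∈ Icc 1 (J - 1), (aco J w ℓ k) ^ 2 * σsq ℓ k
        = uco J w k ^ 2 * (∑ ℓ ∈ Icc 1 (J - 1), (gco J k ℓ) ^ 2 * σsq ℓ k)
          + vco J w k ^ 2 * (∑ ℓ ∈ Icc 1 (J - 1), (gco J (k+1) ℓ) ^ 2 * σsq ℓ k)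
          + (-(2 * (uco J w k * vco J w k) *
              ∑ ℓ ∈ Icc 1 (J - 1), (gco J k ℓ * gco J (k+1) ℓ) * σsq ℓ k)) := by
      rw [Finset.mul_sum, Finset.mul_sum, Finset.mul_sum, ← Finset.sum_add_distrib,
        ← Finset.sum_neg_distrib, ← Finset.sum_add_distrib]
      exact Finset.sum_congr rfl fun ℓ _ => by unfold aco; ring
    rw [hsplit]
    have e1 : uco J w k ^ 2 * (∑ ℓ ∈ Icc 1 (J - 1), (gco J k ℓ) ^ 2 * σsq ℓ k)
        = (if k ∈ Icc 2 (J-1) then w k ^ 2 * (σsq (k-1) k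
            + (((J:ℝ) - (k:ℝ))^2)⁻¹ * ∑ ℓ ∈ Icc k (J-1), σsq ℓ k) else 0) := by
      unfold uco
      split_ifs with h
      · rw [sum_gsq hJ3 h]
      · simp
    have e2 : vco J w k ^ 2 * (∑ ℓ ∈ Icc 1 (J - 1), (gco J (k+1) ℓ) ^ 2 * σsq ℓ k)
        = (if k ∈ Icc 1 (J-2) then w (k+1) ^ 2 * (σsq k k
            + (((J:ℝ) - (k:ℝ) - 1)^2)⁻¹ * ∑ ℓ ∈ Icc (k+1) (J-1), σsq ℓ k) else 0) := by
      unfold vco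
      split_ifs with h
      · have hm := mem_Icc.mp h
        have hk1 : k + 1 ∈ Icc 2 (J-1) := mem_Icc.mpr ⟨by omega, by omega⟩
        rw [sum_gsq hJ3 hk1]
        have hc : ((J : ℝ) - ((k + 1 : ℕ) : ℝ)) = (J : ℝ) - (k : ℝ) - 1 := by push_cast; ring
        rw [hc]
        simp only [Nat.add_sub_cancel]
      · simp
    have e3 : -(2 * (uco J w k * vco J w k) *
          ∑ ℓ ∈ Icc 1 (J - 1), (gco J k ℓ * gco J (k+1) ℓ) * σsq ℓ k)
        = (if k ∈ Icc 2 (J-2) then 2 * w k * w (k+1) * ((J:ℝ) - (k:ℝ))⁻¹ *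
            (σsq k k - ((J:ℝ) - (k:ℝ) - 1)⁻¹ * ∑ ℓ ∈ Icc (k+1) (J-1), σsq ℓ k) else 0) := by
      by_cases h : k ∈ Icc 2 (J-2)
      · have hm := mem_Icc.mp h
        have h1 : k ∈ Icc 2 (J-1) := mem_Icc.mpr ⟨hm.1, by omega⟩
        have h2 : k ∈ Icc 1 (J-2) := mem_Icc.mpr ⟨by omega, hm.2⟩
        unfold uco vco
        rw [if_pos h1, if_pos h2, sum_gg hJ3 h, if_pos h]
        ring
      · rw [if_neg h]
        unfold uco vco
        by_cases h1 : k ∈ Icc 2 (J-1) <;> by_cases h2 : k ∈ Icc 1 (J-2)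
        · exfalso
          simp only [mem_Icc] at h h1 h2
          omega
        · rw [if_pos h1, if_neg h2]; ring
        · rw [if_neg h1, if_pos h2]; ring
        · rw [if_neg h1, if_neg h2]; ring
    rw [e1, e2, e3]
  calc ∑ k ∈ Icc 1 (J-1), ∑ ℓ ∈ Icc 1 (J - 1), (aco J w ℓ k) ^ 2 * σsq ℓ k
      = ∑ k ∈ Icc 1 (J-1),
          ((if k ∈ Icc 2 (J-1) then w k ^ 2 * (σsq (k-1) k
              + (((J:ℝ) - (k:ℝ))^2)⁻¹ * ∑ ℓ ∈ Icc k (J-1), σsq ℓ k) else 0)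
          + (if k ∈ Icc 1 (J-2) then w (k+1) ^ 2 * (σsq k k
              + (((J:ℝ) - (k:ℝ) - 1)^2)⁻¹ * ∑ ℓ ∈ Icc (k+1) (J-1), σsq ℓ k) else 0)
          + (if k ∈ Icc 2 (J-2) then 2 * w k * w (k+1) * ((J:ℝ) - (k:ℝ))⁻¹ *
              (σsq k k - ((J:ℝ) - (k:ℝ) - 1)⁻¹ * ∑ ℓ ∈ Icc (k+1) (J-1), σsq ℓ k) else 0)) :=
        Finset.sum_congr rfl hinner
    _ = (∑ k ∈ Icc 2 (J-1), w k ^ 2 * (σsq (k-1) k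
              + (((J:ℝ) - (k:ℝ))^2)⁻¹ * ∑ ℓ ∈ Icc k (J-1), σsq ℓ k))
        + (∑ k ∈ Icc 1 (J-2), w (k+1) ^ 2 * (σsq k k
              + (((J:ℝ) - (k:ℝ) - 1)^2)⁻¹ * ∑ ℓ ∈ Icc (k+1) (J-1), σsq ℓ k))
        + (∑ k ∈ Icc 2 (J-2), 2 * w k * w (k+1) * ((J:ℝ) - (k:ℝ))⁻¹ *
              (σsq k k - ((J:ℝ) - (k:ℝ) - 1)⁻¹ * ∑ ℓ ∈ Icc (k+1) (J-1), σsq ℓ k)) := by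
        rw [Finset.sum_add_distrib, Finset.sum_add_distrib,
          Finset.sum_ite_mem, Finset.inter_eq_right.mpr (Icc_subset_Icc (by omega) le_rfl),
          Finset.sum_ite_mem, Finset.inter_eq_right.mpr (Icc_subset_Icc le_rfl (by omega)),
          Finset.sum_ite_mem, Finset.inter_eq_right.mpr (Icc_subset_Icc (by omega) (by omega))]
    _ = ∑ j ∈ Icc 2 (J - 1), (w j) ^ 2 *
          (σsq (j - 1) j + σsq (j - 1) (j - 1)
            + (((J : ℝ) - (j : ℝ)) ^ 2)⁻¹ * ∑ l ∈ Icc j (J - 1), (σsq l j + σsq l (j - 1)))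
        + 2 * ∑ j ∈ Icc 2 (J - 2), w j * w (j + 1) * ((J : ℝ) - (j : ℝ))⁻¹ *
            (σsq j j - ((J : ℝ) - (j : ℝ) - 1)⁻¹ * ∑ l ∈ Icc (j + 1) (J - 1), σsq l j) := by
        have hS2 : ∑ k ∈ Icc 1 (J-2), w (k+1) ^ 2 * (σsq k k
              + (((J:ℝ) - (k:ℝ) - 1)^2)⁻¹ * ∑ ℓ ∈ Icc (k+1) (J-1), σsq ℓ k)
            = ∑ j ∈ Icc 2 (J-1), w j ^ 2 * (σsq (j-1) (j-1)
              + (((J:ℝ) - (j:ℝ))^2)⁻¹ * ∑ ℓ ∈ Icc j (J-1), σsq ℓ (j-1)) := by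
          rw [← reindex_sum hJ3 (fun j => w j ^ 2 * (σsq (j-1) (j-1)
            + (((J:ℝ) - (j:ℝ))^2)⁻¹ * ∑ ℓ ∈ Icc j (J-1), σsq ℓ (j-1)))]
          refine Finset.sum_congr rfl fun k _ => ?_
          have hc : ((J : ℝ) - ((k + 1 : ℕ) : ℝ)) = (J : ℝ) - (k : ℝ) - 1 := by push_cast; ring
          simp only [Nat.add_sub_cancel, hc]
        rw [hS2]
        have hS1 : (∑ k ∈ Icc 2 (J-1), w k ^ 2 * (σsq (k-1) k
              + (((J:ℝ) - (k:ℝ))^2)⁻¹ * ∑ ℓ ∈ Icc k (J-1), σsq ℓ k))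
            + (∑ j ∈ Icc 2 (J-1), w j ^ 2 * (σsq (j-1) (j-1)
              + (((J:ℝ) - (j:ℝ))^2)⁻¹ * ∑ ℓ ∈ Icc j (J-1), σsq ℓ (j-1)))
            = ∑ j ∈ Icc 2 (J - 1), (w j) ^ 2 *
              (σsq (j - 1) j + σsq (j - 1) (j - 1)
                + (((J : ℝ) - (j : ℝ)) ^ 2)⁻¹ * ∑ l ∈ Icc j (J - 1), (σsq l j + σsq l (j - 1))) := by
          rw [← Finset.sum_add_distrib]
          refine Finset.sum_congr rfl fun j _ => ?_
          rw [Finset.sum_add_distrib]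
          ring
        rw [hS1]
        congr 1
        rw [Finset.mul_sum]
        exact Finset.sum_congr rfl fun j _ => by ring
end

section
/- In Setting (B), for any deterministic constants v_2,...,v_{J−1} and w_2,...,w_{J−1}, the estimators β̂^NPWP = Σ_{j=2}^{J−1} v_j·A_j and β̂^CO = Σ_{j=2}^{J−1} w_j·B_j satisfy Cov(β̂^NPWP, β̂^CO) = Σ_{j=2}^{J−1} v_j·w_j·[σ²_{j−1,j}/(j−1) + (1/(J−j)²)·Σ_{i=j}^{J−1} σ²_{i,j}] + Σ_{j=2}^{J−2} v_j·w_{j+1}·[σ²_{j,j}/(J−j) − (1/((J−j)(J−j−1)))·Σ_{i=j+1}^{J−1} σ²_{i,j}]. In particular, this covariance does not depend on τ². -/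
open MeasureTheory ProbabilityTheory Finset

lemma covar_linear {Ω : Type*} [MeasureSpace Ω] [IsProbabilityMeasure (ℙ : Measure Ω)]
    {ιt : Type*} [DecidableEq ιt] (S : Finset ιt) (Z : ιt → Ω → ℝ)
    (hL2 : ∀ s ∈ S, MemLp (Z s) 2 ℙ)
    (hE : ∀ s ∈ S, (∫ ω, Z s ω) = 0)
    (hind : ∀ s ∈ S, ∀ t ∈ S, s ≠ t → IndepFun (Z s) (Z t) ℙ)
    (c d : ιt → ℝ) (cf cg : ℝ) (f g : Ω → ℝ)
    (hf : ∀ ω, f ω = cf + ∑ s ∈ S, c s * Z s ω)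
    (hg : ∀ ω, g ω = cg + ∑ s ∈ S, d s * Z s ω) :
    covar f g = ∑ s ∈ S, c s * d s * variance (Z s) ℙ := by
  have hint : ∀ s ∈ S, Integrable (Z s) ℙ := fun s hs => (hL2 s hs).integrable one_le_two
  have hintc : ∀ (e : ιt → ℝ), Integrable (fun ω => ∑ s ∈ S, e s * Z s ω) ℙ := by
    intro e
    exact integrable_finset_sum S (fun s hs => ((hint s hs).const_mul (e s)))
  have hprod : ∀ s ∈ S, ∀ t ∈ S, Integrable (fun ω => Z s ω * Z t ω) ℙ := by
    intro s hs t ht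
    rcases eq_or_ne s t with rfl | hst
    · have := (hL2 s hs).integrable_sq
      simpa [pow_two] using this
    · exact (hind s hs t ht hst).integrable_mul (hint s hs) (hint t ht)
  have hIf : (∫ ω, f ω) = cf := by
    have : (fun ω => f ω) = fun ω => cf + ∑ s ∈ S, c s * Z s ω := funext hf
    rw [this, integral_add (integrable_const _) (hintc c), integral_const, probReal_univ,
      integral_finset_sum _ (fun s hs => ((hint s hs).const_mul (c s)))]
    simp only [integral_const_mul]
    rw [Finset.sum_congr rfl (fun s hs => by rw [hE s hs, mul_zero])]
    simp
  have hIg : (∫ ω, g ω) = cg := by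
    have : (fun ω => g ω) = fun ω => cg + ∑ s ∈ S, d s * Z s ω := funext hg
    rw [this, integral_add (integrable_const _) (hintc d), integral_const, probReal_univ,
      integral_finset_sum _ (fun s hs => ((hint s hs).const_mul (d s)))]
    simp only [integral_const_mul]
    rw [Finset.sum_congr rfl (fun s hs => by rw [hE s hs, mul_zero])]
    simp
  have hZZ : ∀ s ∈ S, ∀ t ∈ S,
      (∫ ω, Z s ω * Z t ω) = if s = t then variance (Z s) ℙ else 0 := by
    intro s hs t ht
    rcases eq_or_ne s t with rfl | hst
    · rw [if_pos rfl, variance_eq_sub (hL2 s hs), hE s hs]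
      simp [pow_two]
    · rw [if_neg hst]
      have h := IndepFun.integral_mul_eq_mul_integral (hind s hs t ht hst) (hint s hs).1 (hint t ht).1
      simpa [Pi.mul_apply, hE s hs] using h
  unfold covar
  calc (∫ ω, (f ω - ∫ x, f x) * (g ω - ∫ x, g x))
      = ∫ ω, ∑ s ∈ S, ∑ t ∈ S, (c s * d t) * (Z s ω * Z t ω) := by
        congr 1; funext ω
        rw [hIf, hIg, hf ω, hg ω]
        ring_nf
        rw [Finset.sum_mul_sum]
        exact Finset.sum_congr rfl fun s _ => Finset.sum_congr rfl fun t _ => by ring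
    _ = ∑ s ∈ S, ∑ t ∈ S, (c s * d t) * ∫ ω, Z s ω * Z t ω := by
        rw [integral_finset_sum _ (fun s hs => integrable_finset_sum _
          (fun t ht => ((hprod s hs t ht).const_mul _)))]
        exact Finset.sum_congr rfl fun s hs => by
          rw [integral_finset_sum _ (fun t ht => ((hprod s hs t ht).const_mul _))]
          exact Finset.sum_congr rfl fun t ht => integral_const_mul _ _
    _ = ∑ s ∈ S, c s * d s * variance (Z s) ℙ := by
        refine Finset.sum_congr rfl fun s hs => ?_
        calc ∑ t ∈ S, c s * d t * ∫ ω, Z s ω * Z t ω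
            = ∑ t ∈ S, (if s = t then c s * d t * variance (Z s) ℙ else 0) := by
              refine Finset.sum_congr rfl fun t ht => ?_
              rw [hZZ s hs t ht]
              split <;> simp
          _ = c s * d s * variance (Z s) ℙ := by rw [Finset.sum_ite_eq S s]; simp [hs]


/-- index set for the random effects -/
def SS (J : ℕ) : Finset (ℕ ⊕ ℕ × ℕ) :=
  ((Icc 1 (J-1)).image Sum.inl) ∪ (((Icc 1 (J-1)) ×ˢ (Icc 1 J)).image Sum.inr)

lemma sum_SS (J : ℕ) (f : ℕ ⊕ ℕ × ℕ → ℝ) :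
    ∑ s ∈ SS J, f s = (∑ i ∈ Icc 1 (J-1), f (Sum.inl i))
      + ∑ q ∈ (Icc 1 (J-1)) ×ˢ (Icc 1 J), f (Sum.inr q) := by
  unfold SS
  rw [Finset.sum_union, Finset.sum_image (by simp), Finset.sum_image (by simp)]
  simp [Finset.disjoint_left]

lemma mem_SS {J : ℕ} {s : ℕ ⊕ ℕ × ℕ} (hs : s ∈ SS J) :
    (∀ i, s = Sum.inl i → i ∈ Icc 1 (J - 1)) ∧
      (∀ i j, s = Sum.inr (i, j) → i ∈ Icc 1 (J - 1) ∧ j ∈ Icc 1 J) := by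
  unfold SS at hs
  rcases Finset.mem_union.1 hs with h | h <;> simp at h
  · obtain ⟨i, hi, rfl⟩ := h
    constructor
    · intro i' hi'
      obtain rfl : i = i' := by simpa using hi'
      simpa using hi
    · intro a b h; cases h
  · obtain ⟨i, p, hip, rfl⟩ := h
    constructor
    · intro _ h; cases h
    · intro i' p' h
      have h2 : (i, p) = (i', p') := Sum.inr.inj h
      obtain rfl : i = i' := congrArg Prod.fst h2
      obtain rfl : p = p' := congrArg Prod.snd h2
      simpa using hip

lemma inl_mem_SS {J i : ℕ} (hi : i ∈ Icc 1 (J-1)) : Sum.inl i ∈ SS J := by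
  unfold SS; exact Finset.mem_union_left _ (Finset.mem_image_of_mem _ hi)

lemma inr_mem_SS {J i p : ℕ} (hi : i ∈ Icc 1 (J-1)) (hp : p ∈ Icc 1 J) :
    Sum.inr (i, p) ∈ SS J := by
  unfold SS
  exact Finset.mem_union_right _ (Finset.mem_image_of_mem _ (Finset.mk_mem_product hi hp))

lemma split_Icc (f : ℕ → ℝ) {j b : ℕ} (hj : 1 ≤ j) (hb : j ≤ b + 1) :
    ∑ i ∈ Icc 1 b, f i = ∑ i ∈ Icc 1 (j-1), f i + ∑ i ∈ Icc j b, f i := by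
  rw [← Finset.sum_union (by rw [Finset.disjoint_left]; intro x; simp; omega)]
  congr 1
  ext x; simp; omega

/-- coefficient of cluster `i` in the centered `A_j` -/
noncomputable def aj (J j i : ℕ) : ℝ := if i < j then ((j:ℝ)-1)⁻¹ else -((J:ℝ)-(j:ℝ))⁻¹

/-- coefficients of the centered `A_j` over `SS J` -/
noncomputable def cA (J j : ℕ) : ℕ ⊕ ℕ × ℕ → ℝ :=
  Sum.elim (aj J j) (fun q => if q.2 = j then aj J j q.1 else 0)

/-- coefficient of `ε i p` in the centered `B_k` -/
noncomputable def bk (J k i p : ℕ) : ℝ :=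
  (if p = k ∧ i = k-1 then 1 else 0) - (if p = k-1 ∧ i = k-1 then 1 else 0)
  - (if p = k ∧ k ≤ i then ((J:ℝ)-(k:ℝ))⁻¹ else 0)
  + (if p = k-1 ∧ k ≤ i then ((J:ℝ)-(k:ℝ))⁻¹ else 0)

/-- coefficients of the centered `B_k` over `SS J` -/
noncomputable def cB (J k : ℕ) : ℕ ⊕ ℕ × ℕ → ℝ :=
  Sum.elim (fun _ => 0) (fun q => bk J k q.1 q.2)
lemma expandA_alg (J : ℕ) (μc β θj : ℝ) (a : ℕ → ℝ) (e : ℕ → ℕ → ℝ) (j : ℕ)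
    (hj2 : 2 ≤ j) (hjJ : j ≤ J - 1) (hJ : 3 ≤ J) :
    ((j:ℝ)-1)⁻¹ * (∑ i ∈ Icc 1 (j-1), (μc + a i + θj + (if i < j then β else 0) + e i j))
      - ((J:ℝ)-(j:ℝ))⁻¹ * (∑ i ∈ Icc j (J-1), (μc + a i + θj + (if i < j then β else 0) + e i j))
    = β + ∑ s ∈ SS J, cA J j s * (Sum.elim a (fun q => e q.1 q.2) s) := by
  have n1 : (j:ℝ) - 1 ≠ 0 := by
    have : (2:ℝ) ≤ (j:ℝ) := by exact_mod_cast hj2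
    linarith
  have n2 : (J:ℝ) - (j:ℝ) ≠ 0 := by
    have : (j:ℝ) + 1 ≤ (J:ℝ) := by exact_mod_cast (by omega : j + 1 ≤ J)
    linarith
  have c1 : ((j - 1 : ℕ) : ℝ) = (j:ℝ) - 1 := by rw [Nat.cast_sub (by omega : 1 ≤ j)]; simp
  have c2 : ((J - j : ℕ) : ℝ) = (J:ℝ) - (j:ℝ) := by rw [Nat.cast_sub (by omega : j ≤ J)]
  have L1 : ∑ i ∈ Icc 1 (j-1), (μc + a i + θj + (if i < j then β else 0) + e i j)
      = ((j:ℝ)-1) * (μc + θj + β) + ((∑ i ∈ Icc 1 (j-1), a i) + ∑ i ∈ Icc 1 (j-1), e i j) := by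
    rw [Finset.sum_congr rfl (g := fun i => (μc + θj + β) + (a i + e i j))
      (fun i hi => by rw [if_pos (by simp at hi; omega)]; ring)]
    simp only [Finset.sum_add_distrib, Finset.sum_const, Nat.card_Icc, nsmul_eq_mul]
    have : ((j - 1 + 1 - 1 : ℕ) : ℝ) = (j:ℝ) - 1 := by rw [Nat.add_sub_cancel]; exact c1
    rw [this]; ring
  have L2 : ∑ i ∈ Icc j (J-1), (μc + a i + θj + (if i < j then β else 0) + e i j)
      = ((J:ℝ)-(j:ℝ)) * (μc + θj) + ((∑ i ∈ Icc j (J-1), a i) + ∑ i ∈ Icc j (J-1), e i j) := by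
    rw [Finset.sum_congr rfl (g := fun i => (μc + θj) + (a i + e i j))
      (fun i hi => by rw [if_neg (by simp at hi; omega)]; ring)]
    simp only [Finset.sum_add_distrib, Finset.sum_const, Nat.card_Icc, nsmul_eq_mul]
    have : ((J - 1 + 1 - j : ℕ) : ℝ) = (J:ℝ) - (j:ℝ) := by
      rw [Nat.sub_add_cancel (by omega : 1 ≤ J)]; exact c2
    rw [this]; ring
  rw [sum_SS]
  have R2 : ∑ q ∈ (Icc 1 (J-1)) ×ˢ (Icc 1 J),
        cA J j (Sum.inr q) * (Sum.elim a (fun q => e q.1 q.2) (Sum.inr q))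
      = ∑ i ∈ Icc 1 (J-1), aj J j i * e i j := by
    rw [Finset.sum_product]
    refine Finset.sum_congr rfl fun i hi => ?_
    rw [Finset.sum_eq_single_of_mem j (Finset.mem_Icc.2 ⟨by omega, by omega⟩)]
    · simp [cA]
    · intro p hp hpj
      simp [cA, hpj]
  rw [R2]
  have split_a := split_Icc a (by omega : 1 ≤ j) (by omega : j ≤ (J-1) + 1)
  have split_ae := split_Icc (fun i => aj J j i * a i) (by omega : 1 ≤ j) (by omega : j ≤ (J-1) + 1)
  have split_e := split_Icc (fun i => aj J j i * e i j) (by omega : 1 ≤ j) (by omega : j ≤ (J-1) + 1)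
  simp only [cA, Sum.elim_inl]
  rw [split_ae, split_e, L1, L2]
  have ha1 : ∑ i ∈ Icc 1 (j-1), aj J j i * a i = ((j:ℝ)-1)⁻¹ * ∑ i ∈ Icc 1 (j-1), a i := by
    rw [Finset.mul_sum]
    exact Finset.sum_congr rfl fun i hi => by
      rw [aj, if_pos (by simp at hi; omega)]
  have ha2 : ∑ i ∈ Icc j (J-1), aj J j i * a i = -((J:ℝ)-(j:ℝ))⁻¹ * ∑ i ∈ Icc j (J-1), a i := by
    rw [Finset.mul_sum]
    exact Finset.sum_congr rfl fun i hi => by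
      rw [aj, if_neg (by simp at hi; omega)]
  have he1 : ∑ i ∈ Icc 1 (j-1), aj J j i * e i j = ((j:ℝ)-1)⁻¹ * ∑ i ∈ Icc 1 (j-1), e i j := by
    rw [Finset.mul_sum]
    exact Finset.sum_congr rfl fun i hi => by
      rw [aj, if_pos (by simp at hi; omega)]
  have he2 : ∑ i ∈ Icc j (J-1), aj J j i * e i j = -((J:ℝ)-(j:ℝ))⁻¹ * ∑ i ∈ Icc j (J-1), e i j := by
    rw [Finset.mul_sum]
    exact Finset.sum_congr rfl fun i hi => by
      rw [aj, if_neg (by simp at hi; omega)]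
  rw [ha1, ha2, he1, he2]
  field_simp
  ring
lemma helperP (J : ℕ) (e : ℕ → ℕ → ℝ) (c0 : ℝ) (i0 p0 : ℕ)
    (hi0 : i0 ∈ Icc 1 (J-1)) (hp0 : p0 ∈ Icc 1 J) :
    ∑ q ∈ (Icc 1 (J-1)) ×ˢ (Icc 1 J), (if q.2 = p0 ∧ q.1 = i0 then c0 else 0) * e q.1 q.2
      = c0 * e i0 p0 := by
  rw [Finset.sum_eq_single_of_mem (i0, p0) (Finset.mk_mem_product hi0 hp0)]
  · simp
  · intro q hq hne
    have : ¬(q.2 = p0 ∧ q.1 = i0) := by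
      rintro ⟨h1, h2⟩
      exact hne (Prod.ext h2 h1)
    rw [if_neg this, zero_mul]

lemma helperT (J : ℕ) (e : ℕ → ℕ → ℝ) (c0 : ℝ) (p0 k : ℕ)
    (hp0 : p0 ∈ Icc 1 J) (hk1 : 1 ≤ k) (hkJ : k ≤ J - 1) :
    ∑ q ∈ (Icc 1 (J-1)) ×ˢ (Icc 1 J), (if q.2 = p0 ∧ k ≤ q.1 then c0 else 0) * e q.1 q.2
      = c0 * ∑ i ∈ Icc k (J-1), e i p0 := by
  rw [Finset.sum_product]
  have inner : ∀ i, ∑ p ∈ Icc 1 J, (if p = p0 ∧ k ≤ i then c0 else 0) * e i p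
      = if k ≤ i then c0 * e i p0 else 0 := by
    intro i
    by_cases hki : k ≤ i
    · rw [if_pos hki, Finset.sum_eq_single_of_mem p0 hp0]
      · rw [if_pos ⟨rfl, hki⟩]
      · intro p hp hne
        rw [if_neg (fun h => hne h.1), zero_mul]
    · rw [if_neg hki]
      refine Finset.sum_eq_zero fun p hp => ?_
      rw [if_neg (fun h => hki h.2), zero_mul]
  rw [Finset.sum_congr rfl fun i _ => inner i]
  rw [split_Icc _ hk1 (by omega : k ≤ (J-1)+1)]
  rw [Finset.sum_eq_zero (fun i hi => if_neg (by simp at hi; omega)), zero_add, Finset.mul_sum]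
  exact Finset.sum_congr rfl fun i hi => if_pos (by simp at hi; omega)

lemma expandB_alg (J : ℕ) (μc β : ℝ) (θ : ℕ → ℝ) (a : ℕ → ℝ) (e : ℕ → ℕ → ℝ) (k : ℕ)
    (hk2 : 2 ≤ k) (hkJ : k ≤ J - 1) (hJ : 3 ≤ J) :
    (μc + a (k-1) + θ k + (if k-1 < k then β else 0) + e (k-1) k)
      - (μc + a (k-1) + θ (k-1) + (if k-1 < k-1 then β else 0) + e (k-1) (k-1))
      - ((J:ℝ)-(k:ℝ))⁻¹ * ∑ l ∈ Icc k (J-1),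
          ((μc + a l + θ k + (if l < k then β else 0) + e l k)
            - (μc + a l + θ (k-1) + (if l < k-1 then β else 0) + e l (k-1)))
    = β + ∑ s ∈ SS J, cB J k s * (Sum.elim a (fun q => e q.1 q.2) s) := by
  have n2 : (J:ℝ) - (k:ℝ) ≠ 0 := by
    have : (k:ℝ) + 1 ≤ (J:ℝ) := by exact_mod_cast (by omega : k + 1 ≤ J)
    linarith
  have hkm : k - 1 ∈ Icc 1 (J-1) := Finset.mem_Icc.2 ⟨by omega, by omega⟩
  have hkmJ : k - 1 ∈ Icc 1 J := Finset.mem_Icc.2 ⟨by omega, by omega⟩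
  have hkJ' : k ∈ Icc 1 J := Finset.mem_Icc.2 ⟨by omega, by omega⟩
  -- simplify LHS
  have hL : ∑ l ∈ Icc k (J-1),
        ((μc + a l + θ k + (if l < k then β else 0) + e l k)
          - (μc + a l + θ (k-1) + (if l < k-1 then β else 0) + e l (k-1)))
      = ((J:ℝ)-(k:ℝ)) * (θ k - θ (k-1)) + ∑ l ∈ Icc k (J-1), (e l k - e l (k-1)) := by
    rw [Finset.sum_congr rfl (g := fun l => (θ k - θ (k-1)) + (e l k - e l (k-1)))
      (fun l hl => by
        rw [if_neg (by simp at hl; omega), if_neg (by simp at hl; omega)]; ring)]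
    simp only [Finset.sum_add_distrib, Finset.sum_const, Nat.card_Icc, nsmul_eq_mul]
    have : ((J - 1 + 1 - k : ℕ) : ℝ) = (J:ℝ) - (k:ℝ) := by
      rw [Nat.sub_add_cancel (by omega : 1 ≤ J), Nat.cast_sub (by omega : k ≤ J)]
    rw [this]
  -- simplify RHS
  rw [sum_SS]
  have R1 : (∑ i ∈ Icc 1 (J-1), cB J k (Sum.inl i) * (Sum.elim a (fun r : ℕ × ℕ => e r.1 r.2) (Sum.inl i))) = 0 := by
    refine Finset.sum_eq_zero fun i _ => ?_
    simp [cB]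
  have R2 : ∑ q ∈ (Icc 1 (J-1)) ×ˢ (Icc 1 J),
        cB J k (Sum.inr q) * (Sum.elim a (fun r : ℕ × ℕ => e r.1 r.2) (Sum.inr q))
      = e (k-1) k - e (k-1) (k-1)
        - ((J:ℝ)-(k:ℝ))⁻¹ * ∑ i ∈ Icc k (J-1), e i k
        + ((J:ℝ)-(k:ℝ))⁻¹ * ∑ i ∈ Icc k (J-1), e i (k-1) := by
    have expand : ∀ q ∈ (Icc 1 (J-1)) ×ˢ (Icc 1 J),
        cB J k (Sum.inr q) * (Sum.elim a (fun r : ℕ × ℕ => e r.1 r.2) (Sum.inr q))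
        = (if q.2 = k ∧ q.1 = k-1 then (1:ℝ) else 0) * e q.1 q.2
          - (if q.2 = k-1 ∧ q.1 = k-1 then (1:ℝ) else 0) * e q.1 q.2
          - (if q.2 = k ∧ k ≤ q.1 then ((J:ℝ)-(k:ℝ))⁻¹ else 0) * e q.1 q.2
          + (if q.2 = k-1 ∧ k ≤ q.1 then ((J:ℝ)-(k:ℝ))⁻¹ else 0) * e q.1 q.2 := by
      intro q _
      simp only [cB, Sum.elim_inr, bk]
      ring
    rw [Finset.sum_congr rfl expand]
    simp only [Finset.sum_add_distrib, Finset.sum_sub_distrib]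
    rw [helperP J e 1 (k-1) k hkm hkJ', helperP J e 1 (k-1) (k-1) hkm hkmJ,
      helperT J e _ k k hkJ' (by omega) hkJ, helperT J e _ (k-1) k hkmJ (by omega) hkJ]
    ring
  rw [R1, R2, hL, if_pos (by omega : k - 1 < k), if_neg (lt_irrefl (k-1))]
  field_simp
  rw [Finset.sum_sub_distrib]
  ring
lemma innerSumEval (J : ℕ) (hJ : 3 ≤ J) (τsq : ℝ) (σ : ℕ → ℕ → ℝ) (j k : ℕ)
    (hj2 : 2 ≤ j) (hjJ : j ≤ J-1) (hk2 : 2 ≤ k) (hkJ : k ≤ J-1) :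
    ∑ s ∈ SS J, cA J j s * cB J k s * (Sum.elim (fun _ : ℕ => τsq) (fun q : ℕ × ℕ => σ q.1 q.2) s)
    = (if k = j then σ (j-1) j / ((j:ℝ)-1)
          + (((J:ℝ)-(j:ℝ))^2)⁻¹ * ∑ i ∈ Icc j (J-1), σ i j else 0)
      + (if k = j+1 then σ j j / ((J:ℝ)-(j:ℝ))
          - (((J:ℝ)-(j:ℝ))*((J:ℝ)-(j:ℝ)-1))⁻¹ * ∑ i ∈ Icc (j+1) (J-1), σ i j else 0) := by
  rw [sum_SS]
  have R1 : (∑ i ∈ Icc 1 (J-1), cA J j (Sum.inl i) * cB J k (Sum.inl i) *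
      (Sum.elim (fun _ : ℕ => τsq) (fun q : ℕ × ℕ => σ q.1 q.2) (Sum.inl i))) = 0 := by
    refine Finset.sum_eq_zero fun i _ => ?_
    simp [cB]
  rw [R1, zero_add]
  have collapse : ∑ q ∈ (Icc 1 (J-1)) ×ˢ (Icc 1 J), cA J j (Sum.inr q) * cB J k (Sum.inr q) *
        (Sum.elim (fun _ : ℕ => τsq) (fun q : ℕ × ℕ => σ q.1 q.2) (Sum.inr q))
      = ∑ i ∈ Icc 1 (J-1), aj J j i * bk J k i j * σ i j := by
    rw [Finset.sum_product]
    refine Finset.sum_congr rfl fun i hi => ?_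
    rw [Finset.sum_eq_single_of_mem j (Finset.mem_Icc.2 ⟨by omega, by omega⟩)]
    · simp [cA, cB]
    · intro p hp hpj
      simp [cA, cB, hpj]
  rw [collapse]
  have n2 : (J:ℝ) - (j:ℝ) ≠ 0 := by
    have : (j:ℝ) + 1 ≤ (J:ℝ) := by exact_mod_cast (by omega : j + 1 ≤ J)
    linarith
  by_cases hkj : k = j
  · subst hkj
    rw [if_pos rfl, if_neg (by omega), add_zero]
    have hbk : ∀ i, bk J k i k = (if i = k-1 then 1 else 0)
        - (if k ≤ i then ((J:ℝ)-(k:ℝ))⁻¹ else 0) := by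
      intro i
      unfold bk
      rw [if_neg (by omega : ¬(k = k - 1 ∧ i = k - 1)),
        if_neg (by omega : ¬(k = k - 1 ∧ k ≤ i))]
      simp
    rw [split_Icc _ (by omega : 1 ≤ k) (by omega : k ≤ (J-1)+1)]
    have S1 : ∑ i ∈ Icc 1 (k-1), aj J k i * bk J k i k * σ i k
        = σ (k-1) k / ((k:ℝ)-1) := by
      rw [Finset.sum_eq_single_of_mem (k-1) (Finset.mem_Icc.2 ⟨by omega, le_refl _⟩)]
      · rw [hbk, aj, if_pos (by omega : k-1 < k), if_pos rfl, if_neg (by omega)]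
        rw [div_eq_inv_mul]; ring
      · intro i hi hne
        simp only [Finset.mem_Icc] at hi
        rw [hbk, if_neg hne, if_neg (by omega)]
        ring
    have S2 : ∑ i ∈ Icc k (J-1), aj J k i * bk J k i k * σ i k
        = (((J:ℝ)-(k:ℝ))^2)⁻¹ * ∑ i ∈ Icc k (J-1), σ i k := by
      rw [Finset.mul_sum]
      refine Finset.sum_congr rfl fun i hi => ?_
      simp only [Finset.mem_Icc] at hi
      rw [hbk, aj, if_neg (by omega), if_neg (by omega), if_pos (by omega)]
      rw [pow_two, mul_inv]
      ring
    rw [S1, S2]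
  · rw [if_neg hkj]
    by_cases hkj' : k = j + 1
    · subst hkj'
      rw [if_pos rfl, zero_add]
      have hbk : ∀ i, bk J (j+1) i j = -(if i = j then 1 else 0)
          + (if j+1 ≤ i then ((J:ℝ)-(j:ℝ)-1)⁻¹ else 0) := by
        intro i
        unfold bk
        rw [if_neg (by omega : ¬(j = j + 1 ∧ i = j + 1 - 1)),
          if_neg (by omega : ¬(j = j + 1 ∧ j + 1 ≤ i))]
        have h2 : (j = j + 1 - 1 ∧ i = j + 1 - 1) ↔ i = j := by omega
        have h4 : (j = j + 1 - 1 ∧ j + 1 ≤ i) ↔ j + 1 ≤ i := by omega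
        rw [if_congr h2 rfl rfl, if_congr h4 rfl rfl,
          show ((j + 1 : ℕ) : ℝ) = (j:ℝ) + 1 from by push_cast; ring,
          show (J:ℝ) - ((j:ℝ) + 1) = (J:ℝ) - (j:ℝ) - 1 from by ring]
        ring
      rw [split_Icc _ (by omega : 1 ≤ j+1) (by omega : j+1 ≤ (J-1)+1)]
      have S1 : ∑ i ∈ Icc 1 (j+1-1), aj J j i * bk J (j+1) i j * σ i j
          = σ j j / ((J:ℝ)-(j:ℝ)) := by
        rw [Finset.sum_eq_single_of_mem j (Finset.mem_Icc.2 ⟨by omega, by omega⟩)]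
        · rw [hbk, aj, if_neg (by omega), if_pos rfl, if_neg (by omega)]
          rw [div_eq_inv_mul]; ring
        · intro i hi hne
          simp only [Finset.mem_Icc] at hi
          rw [hbk, if_neg hne, if_neg (by omega)]
          ring
      have S2 : ∑ i ∈ Icc (j+1) (J-1), aj J j i * bk J (j+1) i j * σ i j
          = -((((J:ℝ)-(j:ℝ))*((J:ℝ)-(j:ℝ)-1))⁻¹ * ∑ i ∈ Icc (j+1) (J-1), σ i j) := by
        rw [Finset.mul_sum, ← Finset.sum_neg_distrib]
        refine Finset.sum_congr rfl fun i hi => ?_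
        simp only [Finset.mem_Icc] at hi
        rw [hbk, aj, if_neg (by omega), if_neg (by omega), if_pos (by omega)]
        rw [mul_inv]
        ring
      rw [S1, S2]
      ring
    · rw [if_neg hkj', add_zero]
      refine Finset.sum_eq_zero fun i hi => ?_
      have hbk : bk J k i j = 0 := by
        unfold bk
        rw [if_neg (by omega : ¬(j = k ∧ i = k - 1)),
          if_neg (by omega : ¬(j = k - 1 ∧ i = k - 1)),
          if_neg (by omega : ¬(j = k ∧ k ≤ i)),
          if_neg (by omega : ¬(j = k - 1 ∧ k ≤ i))]
        ring
      rw [hbk]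
      ring

/-- **Covariance of the non-parametric within-period and crossover estimators in Setting (B).**
In particular, the right-hand side does not depend on `τ²`. -/
theorem stmt_15
    {Ω : Type*} [MeasureSpace Ω] [IsProbabilityMeasure (ℙ : Measure Ω)]
    (J : ℕ) (hJ : 3 ≤ J)
    (μc β τsq : ℝ) (θ : ℕ → ℝ) (σsq : ℕ → ℕ → ℝ)
    (α : ℕ → Ω → ℝ) (ε : ℕ → ℕ → Ω → ℝ)
    (hmα : ∀ i, Measurable (α i)) (hmε : ∀ i j, Measurable (ε i j))
    -- the random variables {α_i} ∪ {ε_{i,j}} are mutually independent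
    (hindep : iIndepFun
      (fun x : {x : ℕ ⊕ ℕ × ℕ // (∀ i, x = Sum.inl i → i ∈ Icc 1 (J - 1)) ∧
          (∀ i j, x = Sum.inr (i, j) → i ∈ Icc 1 (J - 1) ∧ j ∈ Icc 1 J)} =>
        Sum.elim α (fun q => ε q.1 q.2) x.1) ℙ)
    -- moment assumptions
    (hEα : ∀ i ∈ Icc 1 (J - 1), ∫ ω, α i ω ∂ℙ = 0)
    (hVα : ∀ i ∈ Icc 1 (J - 1), variance (α i) ℙ = τsq)
    (hL2α : ∀ i ∈ Icc 1 (J - 1), MemLp (α i) 2 ℙ)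
    (hEε : ∀ i ∈ Icc 1 (J - 1), ∀ j ∈ Icc 1 J, ∫ ω, ε i j ω ∂ℙ = 0)
    (hVε : ∀ i ∈ Icc 1 (J - 1), ∀ j ∈ Icc 1 J, variance (ε i j) ℙ = σsq i j)
    (hL2ε : ∀ i ∈ Icc 1 (J - 1), ∀ j ∈ Icc 1 J, MemLp (ε i j) 2 ℙ)
    -- the mixed effects model: cluster i is on intervention in periods j > i
    (Y : ℕ → ℕ → Ω → ℝ)
    (hY : ∀ i j ω, Y i j ω = μc + α i ω + θ j + (if i < j then β else 0) + ε i j ω)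
    -- the within-period contrast A_j
    (A : ℕ → Ω → ℝ)
    (hA : ∀ j ω, A j ω = ((j : ℝ) - 1)⁻¹ * ∑ i ∈ Icc 1 (j - 1), Y i j ω
        - ((J : ℝ) - (j : ℝ))⁻¹ * ∑ i ∈ Icc j (J - 1), Y i j ω)
    -- the crossover contrast B_j
    (B : ℕ → Ω → ℝ)
    (hB : ∀ j ω, B j ω = Y (j - 1) j ω - Y (j - 1) (j - 1) ω
        - ((J : ℝ) - (j : ℝ))⁻¹ * ∑ l ∈ Icc j (J - 1), (Y l j ω - Y l (j - 1) ω))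
    -- the non-parametric within-period estimator with deterministic weights v
    (v : ℕ → ℝ) (βNPWP : Ω → ℝ)
    (hNPWP : ∀ ω, βNPWP ω = ∑ j ∈ Icc 2 (J - 1), v j * A j ω)
    -- the crossover estimator with deterministic weights w
    (w : ℕ → ℝ) (βCO : Ω → ℝ)
    (hCO : ∀ ω, βCO ω = ∑ j ∈ Icc 2 (J - 1), w j * B j ω)
    :
    covar βNPWP βCO
      = ∑ j ∈ Icc 2 (J - 1), v j * w j *
          (σsq (j - 1) j / ((j : ℝ) - 1)
            + (((J : ℝ) - (j : ℝ)) ^ 2)⁻¹ * ∑ i ∈ Icc j (J - 1), σsq i j)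
        + ∑ j ∈ Icc 2 (J - 2), v j * w (j + 1) *
            (σsq j j / ((J : ℝ) - (j : ℝ))
              - (((J : ℝ) - (j : ℝ)) * ((J : ℝ) - (j : ℝ) - 1))⁻¹ *
                  ∑ i ∈ Icc (j + 1) (J - 1), σsq i j) := by
  
  set Z : (ℕ ⊕ ℕ × ℕ) → Ω → ℝ := Sum.elim α (fun q => ε q.1 q.2) with hZ
  have hZel : ∀ (s : ℕ ⊕ ℕ × ℕ) (ω : Ω),
      Sum.elim (fun i => α i ω) (fun q : ℕ × ℕ => ε q.1 q.2 ω) s = Z s ω := by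
    rintro (i | q) ω <;> rfl
  have hZL2 : ∀ s ∈ SS J, MemLp (Z s) 2 ℙ := by
    rintro (i | ⟨i, p⟩) hs
    · exact hL2α i ((mem_SS hs).1 i rfl)
    · obtain ⟨hi, hp⟩ := (mem_SS hs).2 i p rfl
      exact hL2ε i hi p hp
  have hZE : ∀ s ∈ SS J, (∫ ω, Z s ω) = 0 := by
    rintro (i | ⟨i, p⟩) hs
    · exact hEα i ((mem_SS hs).1 i rfl)
    · obtain ⟨hi, hp⟩ := (mem_SS hs).2 i p rfl
      exact hEε i hi p hp
  have hZV : ∀ s ∈ SS J, variance (Z s) ℙ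
      = Sum.elim (fun _ : ℕ => τsq) (fun q : ℕ × ℕ => σsq q.1 q.2) s := by
    rintro (i | ⟨i, p⟩) hs
    · exact hVα i ((mem_SS hs).1 i rfl)
    · obtain ⟨hi, hp⟩ := (mem_SS hs).2 i p rfl
      exact hVε i hi p hp
  have hZind : ∀ s ∈ SS J, ∀ t ∈ SS J, s ≠ t → IndepFun (Z s) (Z t) ℙ := by
    intro s hs t ht hst
    exact hindep.indepFun (i := ⟨s, mem_SS hs⟩) (j := ⟨t, mem_SS ht⟩)
      (by simpa [Subtype.ext_iff] using hst)
  -- expansions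
  have hf : ∀ ω, βNPWP ω = (∑ j ∈ Icc 2 (J-1), v j * β)
      + ∑ s ∈ SS J, (∑ j ∈ Icc 2 (J-1), v j * cA J j s) * Z s ω := by
    intro ω
    rw [hNPWP]
    have step : ∀ j ∈ Icc 2 (J-1), v j * A j ω
        = v j * β + ∑ s ∈ SS J, (v j * cA J j s) * Z s ω := by
      intro j hj
      simp only [Finset.mem_Icc] at hj
      have hAj := expandA_alg J μc β (θ j) (fun i => α i ω) (fun i p => ε i p ω) j hj.1 hj.2 hJ
      rw [hA, Finset.sum_congr rfl (fun i _ => hY i j ω),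
        Finset.sum_congr rfl (fun i _ => hY i j ω), hAj, mul_add, Finset.mul_sum]
      congr 1
      refine Finset.sum_congr rfl fun s _ => ?_
      rw [← hZel s ω]
      ring
    rw [Finset.sum_congr rfl step, Finset.sum_add_distrib]
    congr 1
    rw [Finset.sum_comm]
    exact Finset.sum_congr rfl fun s _ => by rw [Finset.sum_mul]
  have hg : ∀ ω, βCO ω = (∑ k ∈ Icc 2 (J-1), w k * β)
      + ∑ s ∈ SS J, (∑ k ∈ Icc 2 (J-1), w k * cB J k s) * Z s ω := by
    intro ω
    rw [hCO]
    have step : ∀ k ∈ Icc 2 (J-1), w k * B k ω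
        = w k * β + ∑ s ∈ SS J, (w k * cB J k s) * Z s ω := by
      intro k hk
      simp only [Finset.mem_Icc] at hk
      have hBk := expandB_alg J μc β θ (fun i => α i ω) (fun i p => ε i p ω) k hk.1 hk.2 hJ
      rw [hB, hY, hY, Finset.sum_congr rfl (fun l _ => by rw [hY, hY]),
        hBk, mul_add, Finset.mul_sum]
      congr 1
      refine Finset.sum_congr rfl fun s _ => ?_
      rw [← hZel s ω]
      ring
    rw [Finset.sum_congr rfl step, Finset.sum_add_distrib]
    congr 1
    rw [Finset.sum_comm]
    exact Finset.sum_congr rfl fun s _ => by rw [Finset.sum_mul]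
  -- apply the covariance formula
  rw [covar_linear (SS J) Z hZL2 hZE hZind _ _ _ _ βNPWP βCO hf hg]
  -- replace variances
  rw [Finset.sum_congr rfl (fun s hs => by rw [hZV s hs])]
  -- expand coefficient products
  have expand : ∀ s ∈ SS J,
      (∑ j ∈ Icc 2 (J-1), v j * cA J j s) * (∑ k ∈ Icc 2 (J-1), w k * cB J k s) *
        (Sum.elim (fun _ : ℕ => τsq) (fun q : ℕ × ℕ => σsq q.1 q.2) s)
      = ∑ j ∈ Icc 2 (J-1), ∑ k ∈ Icc 2 (J-1),
          v j * w k * (cA J j s * cB J k s *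
            (Sum.elim (fun _ : ℕ => τsq) (fun q : ℕ × ℕ => σsq q.1 q.2) s)) := by
    intro s _
    rw [Finset.sum_mul_sum, Finset.sum_mul]
    refine Finset.sum_congr rfl fun j _ => ?_
    rw [Finset.sum_mul]
    exact Finset.sum_congr rfl fun k _ => by ring
  rw [Finset.sum_congr rfl expand, Finset.sum_comm]
  rw [Finset.sum_congr rfl (fun j _ => Finset.sum_comm)]
  have inner_eval : ∀ j ∈ Icc 2 (J-1), ∀ k ∈ Icc 2 (J-1),
      ∑ s ∈ SS J, v j * w k * (cA J j s * cB J k s *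
          (Sum.elim (fun _ : ℕ => τsq) (fun q : ℕ × ℕ => σsq q.1 q.2) s))
      = v j * w k *
          ((if k = j then σsq (j-1) j / ((j:ℝ)-1)
              + (((J:ℝ)-(j:ℝ))^2)⁻¹ * ∑ i ∈ Icc j (J-1), σsq i j else 0)
            + (if k = j+1 then σsq j j / ((J:ℝ)-(j:ℝ))
              - (((J:ℝ)-(j:ℝ))*((J:ℝ)-(j:ℝ)-1))⁻¹ * ∑ i ∈ Icc (j+1) (J-1), σsq i j else 0)) := by
    intro j hj k hk
    simp only [Finset.mem_Icc] at hj hk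
    rw [← Finset.mul_sum, innerSumEval J hJ τsq σsq j k hj.1 hj.2 hk.1 hk.2]
  rw [Finset.sum_congr rfl (fun j hj => Finset.sum_congr rfl (fun k hk => inner_eval j hj k hk))]
  -- collapse the k-sum
  have collapse : ∀ j ∈ Icc 2 (J-1),
      ∑ k ∈ Icc 2 (J-1), (v j * w k *
          ((if k = j then σsq (j-1) j / ((j:ℝ)-1)
              + (((J:ℝ)-(j:ℝ))^2)⁻¹ * ∑ i ∈ Icc j (J-1), σsq i j else 0)
            + (if k = j+1 then σsq j j / ((J:ℝ)-(j:ℝ))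
              - (((J:ℝ)-(j:ℝ))*((J:ℝ)-(j:ℝ)-1))⁻¹ * ∑ i ∈ Icc (j+1) (J-1), σsq i j else 0)))
      = v j * w j * (σsq (j-1) j / ((j:ℝ)-1)
              + (((J:ℝ)-(j:ℝ))^2)⁻¹ * ∑ i ∈ Icc j (J-1), σsq i j)
        + (if j ∈ Icc 2 (J-2) then v j * w (j+1) * (σsq j j / ((J:ℝ)-(j:ℝ))
              - (((J:ℝ)-(j:ℝ))*((J:ℝ)-(j:ℝ)-1))⁻¹ * ∑ i ∈ Icc (j+1) (J-1), σsq i j) else 0) := by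
    intro j hj
    simp only [Finset.mem_Icc] at hj
    have split : ∀ k ∈ Icc 2 (J-1), (v j * w k *
          ((if k = j then σsq (j-1) j / ((j:ℝ)-1)
              + (((J:ℝ)-(j:ℝ))^2)⁻¹ * ∑ i ∈ Icc j (J-1), σsq i j else 0)
            + (if k = j+1 then σsq j j / ((J:ℝ)-(j:ℝ))
              - (((J:ℝ)-(j:ℝ))*((J:ℝ)-(j:ℝ)-1))⁻¹ * ∑ i ∈ Icc (j+1) (J-1), σsq i j else 0)))
        = (if k = j then v j * w k * (σsq (j-1) j / ((j:ℝ)-1)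
              + (((J:ℝ)-(j:ℝ))^2)⁻¹ * ∑ i ∈ Icc j (J-1), σsq i j) else 0)
          + (if k = j+1 then v j * w k * (σsq j j / ((J:ℝ)-(j:ℝ))
              - (((J:ℝ)-(j:ℝ))*((J:ℝ)-(j:ℝ)-1))⁻¹ * ∑ i ∈ Icc (j+1) (J-1), σsq i j) else 0) := by
      intro k _
      by_cases h1 : k = j <;> by_cases h2 : k = j + 1 <;>
        simp [h1, h2] <;> first | omega | ring
    rw [Finset.sum_congr rfl split, Finset.sum_add_distrib,
      Finset.sum_ite_eq' (Icc 2 (J-1)) j, Finset.sum_ite_eq' (Icc 2 (J-1)) (j+1)]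
    have hjm : j ∈ Icc 2 (J-1) := Finset.mem_Icc.2 ⟨hj.1, hj.2⟩
    rw [if_pos hjm]
    congr 1
    by_cases hc : j + 1 ∈ Icc 2 (J-1)
    · rw [if_pos hc, if_pos]
      simp only [Finset.mem_Icc] at hc ⊢
      omega
    · rw [if_neg hc, if_neg]
      simp only [Finset.mem_Icc] at hc ⊢
      omega
  rw [Finset.sum_congr rfl collapse, Finset.sum_add_distrib]
  congr 1
  rw [Finset.sum_ite_mem]
  congr 1
  ext x
  simp only [Finset.mem_inter, Finset.mem_Icc]
  omega
end
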